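/- arXiv:1305.6376 — 7 statements merged into one kernel-verified Lean document; each statement's English description precedes it below -/
import Mathlib

section
/- For every black pebbling of the balanced binary tree of height h ≥ 2 that starts with no pebbles, ends with no pebbles, and at some time has a pebble on the root, there exists a time t at which the total number of pebbles on the tree is at least h. -/
/-!
Write `w(v, t)` for the number of pebbles in the subtree of `v` at time `t`. If that subtree has
`k + 1` full levels, is empty at time `t₀`, and `v` is pebbled at time `t₁ ≥ t₀`, then
`w(v, t) ≥ k + 1` for some `t ∈ [t₀, t₁]`; for the root and `k = h - 1` this is the theorem.
Induct on `k`. Just before `v` is first pebbled, at time `r`, both children `a, b` carry pebbles.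
Let `r_a, r_b ≤ r` be the last times their subtrees are empty, say `r_a ≤ r_b`. By induction the
subtree of `b` carries `k + 1` pebbles at some time in `(r_b, r]`, and at that time the subtree
of `a`, nonempty after `r_a`, carries at least one more.
-/

/-- Number of nodes of the complete d-ary tree of height h (levels 0..h-1). -/
def treeSize (d h : ℕ) : ℕ := ∑ k ∈ Finset.range h, d ^ k

/-- A black pebble configuration: heap-indexed nodes, node 0 is the root. -/
abbrev BCfg := ℕ → Bool

/-- j is a child of i in heap indexing of the d-ary tree. -/
def child (d i j : ℕ) : Prop := ∃ k, k < d ∧ j = d * i + 1 + k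

/-- i is a leaf of the tree with n nodes. -/
def isLeaf (d n i : ℕ) : Prop := i < n ∧ n ≤ d * i + 1

/-- Weight of a configuration: number of pebbles on the tree. -/
def bweight (n : ℕ) (c : BCfg) : ℕ := ∑ i ∈ Finset.range n, (if c i then 1 else 0)

/-- All children of i are pebbled. -/
def bcovered (d : ℕ) (c : BCfg) (i : ℕ) : Prop := ∀ j, child d i j → c j = true

/-- A legal black pebbling move: remove a pebble; place a pebble on a node whose
children are all pebbled, optionally simultaneously removing pebbles from any
children (sliding move); or place a pebble on a leaf. -/
def BMove (d n : ℕ) (c c' : BCfg) : Prop :=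
  (∃ i, c' = Function.update c i false) ∨
  (∃ i, i < n ∧ bcovered d c i ∧ c' i = true ∧
     ∀ j, j ≠ i → (c' j = c j ∨ (child d i j ∧ c' j = false))) ∨
  (∃ i, isLeaf d n i ∧ c' = Function.update c i true)

/-- A black pebbling: a sequence of configurations connected by legal moves. -/
def BPebbling (d n T : ℕ) (c : ℕ → BCfg) : Prop := ∀ t, t < T → BMove d n (c t) (c (t + 1))

def BEmpty (c : BCfg) : Prop := ∀ i, c i = false

/-- A root-pebbling: starts and ends empty, and at some time the root (node 0) is pebbled. -/
def BRootPebbling (d n T : ℕ) (c : ℕ → BCfg) : Prop :=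
  BPebbling d n T c ∧ BEmpty (c 0) ∧ BEmpty (c T) ∧ ∃ t, t ≤ T ∧ c t 0 = true

namespace BlackPebbling

lemma exists_last_of_le {P : ℕ → Prop} {a b : ℕ} (ha : P a) (hab : a ≤ b) :
    ∃ r, a ≤ r ∧ r ≤ b ∧ P r ∧ ∀ u, r < u → u ≤ b → ¬P u := by
  classical
  exact ⟨Nat.findGreatest P b, Nat.le_findGreatest hab ha, Nat.findGreatest_le b,
    Nat.findGreatest_spec hab ha, fun _ => Nat.findGreatest_is_greatest⟩

lemma exists_add_two_le_add {A B : ℕ → ℕ} {t₀ r k : ℕ} (htr : t₀ ≤ r)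
    (hA₀ : A t₀ = 0) (hB₀ : B t₀ = 0)
    (hA : ∀ s, t₀ ≤ s → s ≤ r → A s = 0 → ∃ u, s ≤ u ∧ u ≤ r ∧ k + 1 ≤ A u)
    (hB : ∀ s, t₀ ≤ s → s ≤ r → B s = 0 → ∃ u, s ≤ u ∧ u ≤ r ∧ k + 1 ≤ B u) :
    ∃ u, t₀ ≤ u ∧ u ≤ r ∧ k + 2 ≤ A u + B u := by
  obtain ⟨a, hta, har, hAa, hA_after⟩ := exists_last_of_le (P := fun s => A s = 0) hA₀ htr
  obtain ⟨b, htb, hbr, hBb, hB_after⟩ := exists_last_of_le (P := fun s => B s = 0) hB₀ htr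
  wlog hab : a ≤ b generalizing A B a b
  · obtain ⟨u, htu, hur, hu⟩ :=
      this hB₀ hA₀ hB hA b htb hbr hBb hB_after a hta har hAa hA_after (by omega)
    exact ⟨u, htu, hur, by omega⟩
  obtain ⟨u, hbu, hur, hBu⟩ := hB b htb hbr hBb
  have hAu : A u ≠ 0 := hA_after u (by grind) hur
  exact ⟨u, by omega, hur, by omega⟩

def parent (i : ℕ) : ℕ := (i - 1) / 2

lemma parent_le (i : ℕ) : parent i ≤ i := by unfold parent; omega

lemma parent_two_mul_add_one (v : ℕ) : parent (2 * v + 1) = v := by unfold parent; omega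

lemma parent_two_mul_add_two (v : ℕ) : parent (2 * v + 2) = v := by unfold parent; omega

lemma antitone_iterate_parent (i : ℕ) : Antitone fun e => parent^[e] i :=
  antitone_nat_of_succ_le fun e => by
    rw [Function.iterate_succ_apply']
    exact parent_le _

def InSubtree (v i : ℕ) : Prop := ∃ e, parent^[e] i = v

lemma InSubtree.refl (v : ℕ) : InSubtree v v := ⟨0, rfl⟩

lemma InSubtree.of_parent_eq {v w i : ℕ} (hw : parent w = v) (h : InSubtree w i) :
    InSubtree v i := by
  obtain ⟨e, he⟩ := h
  exact ⟨e + 1, by rw [Function.iterate_succ_apply', he, hw]⟩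

lemma not_inSubtree_of_inSubtree_sibling {v i : ℕ} (h₁ : InSubtree (2 * v + 1) i) :
    ¬InSubtree (2 * v + 2) i := by
  rintro ⟨f, hf⟩
  obtain ⟨e, he⟩ := h₁
  rcases lt_trichotomy e f with hef | rfl | hfe
  · have := antitone_iterate_parent i (Nat.succ_le_of_lt hef)
    simp only [Function.iterate_succ_apply', he, hf, parent_two_mul_add_one] at this
    omega
  · omega
  · have := antitone_iterate_parent i (Nat.succ_le_of_lt hfe)
    simp only [Function.iterate_succ_apply', he, hf, parent_two_mul_add_two] at this
    omega

open Classical in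
noncomputable def subtreeWeight (n v : ℕ) (c : BCfg) : ℕ :=
  ∑ i ∈ (Finset.range n).filter (InSubtree v), if c i then 1 else 0

section subtreeWeight

variable {n v : ℕ} {c : BCfg}

lemma subtreeWeight_le_bweight : subtreeWeight n v c ≤ bweight n c := by
  classical
  exact Finset.sum_le_sum_of_subset (Finset.filter_subset _ _)

lemma subtreeWeight_pos (hv : v < n) (hc : c v = true) : 0 < subtreeWeight n v c := by
  classical
  refine lt_of_lt_of_le (by simp [hc]) (Finset.single_le_sum (fun _ _ => Nat.zero_le _)
    (Finset.mem_filter.2 ⟨Finset.mem_range.2 hv, InSubtree.refl v⟩))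

lemma subtreeWeight_eq_zero_of_bEmpty (hc : BEmpty c) : subtreeWeight n v c = 0 :=
  Finset.sum_eq_zero fun i _ => by simp [hc i]

lemma subtreeWeight_children_le :
    subtreeWeight n (2 * v + 1) c + subtreeWeight n (2 * v + 2) c ≤ subtreeWeight n v c := by
  classical
  unfold subtreeWeight
  rw [← Finset.sum_union (Finset.disjoint_filter.2 fun _ _ => not_inSubtree_of_inSubtree_sibling)]
  refine Finset.sum_le_sum_of_subset (Finset.union_subset ?_ ?_) <;>
    refine Finset.monotone_filter_right _ fun i _ hi => hi.of_parent_eq ?_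
  exacts [parent_two_mul_add_one v, parent_two_mul_add_two v]

end subtreeWeight

lemma _root_.BMove.bcovered_of_pebble {d n v : ℕ} {c c' : BCfg} (hm : BMove d n c c')
    (hv : c v = false) (hv' : c' v = true) (hvn : d * v + 1 < n) : bcovered d c v := by
  rcases hm with ⟨i, rfl⟩ | ⟨i, -, hcov, -, hrest⟩ | ⟨i, hleaf, rfl⟩
  · rcases eq_or_ne v i with rfl | hne
    · simp at hv'
    · simp [Function.update_of_ne hne, hv] at hv'
  · rcases eq_or_ne v i with rfl | hne
    · exact hcov
    · rcases hrest v hne with h | ⟨-, h⟩ <;> simp [h, hv] at hv'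
  · rcases eq_or_ne v i with rfl | hne
    · exact absurd hleaf.2 (by omega)
    · simp [Function.update_of_ne hne, hv] at hv'

/-- `2 ^ k * (v + 2) ≤ n + 1` says that the rightmost node `2 ^ k * (v + 2) - 2` at depth `k`
below `v` lies in the tree. -/
theorem exists_le_subtreeWeight {n T : ℕ} {c : ℕ → BCfg} (hp : BPebbling 2 n T c) (k : ℕ) :
    ∀ v t₀ t₁, 2 ^ k * (v + 2) ≤ n + 1 → subtreeWeight n v (c t₀) = 0 → t₀ ≤ t₁ → t₁ ≤ T →
      c t₁ v = true → ∃ t, t₀ ≤ t ∧ t ≤ t₁ ∧ k + 1 ≤ subtreeWeight n v (c t) := by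
  induction k with
  | zero =>
    intro v t₀ t₁ hfit _ ht₀₁ _ hv
    exact ⟨t₁, ht₀₁, le_rfl, subtreeWeight_pos (by omega) hv⟩
  | succ k ih =>
    intro v t₀ t₁ hfit hempty ht₀₁ ht₁ hv
    have hfit_right : 2 ^ k * (2 * v + 2 + 2) ≤ n + 1 := by rw [pow_succ] at hfit; linarith
    have hfit_left : 2 ^ k * (2 * v + 1 + 2) ≤ n + 1 :=
      le_trans (Nat.mul_le_mul_left _ (by omega)) hfit_right
    have hinner : 2 * v + 1 < n := by
      have := Nat.le_mul_of_pos_left (2 * v + 2 + 2) (Nat.two_pow_pos k)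
      omega
    have hv₀ : c t₀ v = false :=
      Bool.eq_false_iff.2 fun h => (subtreeWeight_pos (by omega) h).ne' hempty
    obtain ⟨r, ht₀r, hrt₁, hvr, hv_after⟩ :=
      exists_last_of_le (P := fun t => c t v = false) hv₀ ht₀₁
    have hrt₁' : r < t₁ := lt_of_le_of_ne hrt₁ (by rintro rfl; simp [hv] at hvr)
    have hcov : bcovered 2 (c r) v := (hp r (by omega)).bcovered_of_pebble hvr
      (by simpa using hv_after (r + 1) (by omega) (by omega)) hinner
    have hchild : ∀ w, 2 ^ k * (w + 2) ≤ n + 1 → c r w = true → ∀ s, t₀ ≤ s → s ≤ r →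
        subtreeWeight n w (c s) = 0 → ∃ u, s ≤ u ∧ u ≤ r ∧ k + 1 ≤ subtreeWeight n w (c u) :=
      fun w hw hwr s _ hsr hs => ih w s r hw hs hsr (by omega) hwr
    have hchildren₀ := subtreeWeight_children_le (n := n) (v := v) (c := c t₀)
    obtain ⟨u, ht₀u, hur, hu⟩ := exists_add_two_le_add
      (A := fun t => subtreeWeight n (2 * v + 1) (c t))
      (B := fun t => subtreeWeight n (2 * v + 2) (c t)) ht₀r (by omega) (by omega)
      (hchild _ hfit_left (hcov _ ⟨0, by omega, rfl⟩))
      (hchild _ hfit_right (hcov _ ⟨1, by omega, rfl⟩))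
    exact ⟨u, ht₀u, by omega, hu.trans subtreeWeight_children_le⟩

lemma treeSize_two_add_one (h : ℕ) : treeSize 2 h + 1 = 2 ^ h := by
  rw [treeSize, Nat.geomSum_eq le_rfl, Nat.div_one, Nat.sub_add_cancel Nat.one_le_two_pow]

end BlackPebbling

open BlackPebbling

theorem black_lower_binary_general (h : ℕ) (T : ℕ) (c : ℕ → BCfg)
    (hp : BRootPebbling 2 (treeSize 2 h) T c) :
    ∃ t, t ≤ T ∧ h ≤ bweight (treeSize 2 h) (c t) := by
  obtain ⟨hpeb, hempty, -, t₁, ht₁, hroot⟩ := hp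
  cases h with
  | zero => exact ⟨0, Nat.zero_le _, Nat.zero_le _⟩
  | succ h =>
    have hfit : 2 ^ h * (0 + 2) ≤ treeSize 2 (h + 1) + 1 := by
      rw [treeSize_two_add_one, pow_succ]
    obtain ⟨t, -, ht, hw⟩ := exists_le_subtreeWeight hpeb h 0 0 t₁ hfit
      (subtreeWeight_eq_zero_of_bEmpty hempty) (Nat.zero_le _) ht₁ hroot
    exact ⟨t, ht.trans ht₁, hw.trans subtreeWeight_le_bweight⟩

/-- every black root-pebbling of the binary tree of height h ≥ 2
uses at least h pebbles at some time. -/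
theorem black_lower_binary (h : ℕ) (hh : 2 ≤ h) (T : ℕ) (c : ℕ → BCfg)
    (hp : BRootPebbling 2 (treeSize 2 h) T c) :
    ∃ t, t ≤ T ∧ h ≤ bweight (treeSize 2 h) (c t) :=
  black_lower_binary_general h T c hp
end

section
/- For every black pebbling of the balanced d-ary tree of height h ≥ 2 (d ≥ 2) that starts with no pebbles, ends with no pebbles, and at some time has a pebble on the root, there is a time at which the number of pebbles on the tree is at least (d−1)·(h−1)+1. -/
/-!
By induction on the height `g`: a subtree of height `g` that is empty at some time and whose root
is pebbled later holds `(d - 1) * (g - 1) + 1` pebbles at some time in between. Just before the root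
is pebbled, all `d` children carry pebbles. Let `r` be the last earlier time at which some child
subtree is empty; the induction hypothesis for that child after time `r` yields a time `u > r` at
which it holds `(d - 1) * (g - 2) + 1` pebbles, while each of the other `d - 1` child subtrees is
nonempty at `u` because `u > r`.
-/

open Finset

def subtree (d : ℕ) : ℕ → ℕ → Finset ℕ
  | _, 0 => ∅
  | v, g + 1 => insert v ((range d).biUnion fun k => subtree d (d * v + 1 + k) g)

def weightOn (s : Finset ℕ) (c : BCfg) : ℕ := ∑ i ∈ s, if c i then 1 else 0

theorem treeSize_succ (d g : ℕ) : treeSize d (g + 1) = treeSize d g + d ^ g :=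
  sum_range_succ _ _

section Subtree

variable {d : ℕ}

theorem self_mem_subtree (v g : ℕ) : v ∈ subtree d v (g + 1) :=
  mem_insert_self _ _

theorem subtree_child_subset {v k : ℕ} (hk : k < d) (g : ℕ) :
    subtree d (d * v + 1 + k) g ⊆ subtree d v (g + 1) :=
  (subset_biUnion_of_mem (fun k => subtree d (d * v + 1 + k) g) (mem_range.2 hk)).trans
    (subset_insert _ _)

theorem mem_subtree_succ {v g x : ℕ} :
    x ∈ subtree d v (g + 1) ↔ x = v ∨ ∃ k < d, x ∈ subtree d (d * v + 1 + k) g := by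
  rw [subtree]
  simp only [mem_insert, mem_biUnion, mem_range]

theorem subtree_one (v : ℕ) : subtree d v 1 = {v} := by
  ext x
  simp [subtree]

theorem le_of_mem_subtree {v g x : ℕ} (hx : x ∈ subtree d v g) : v ≤ x := by
  induction g generalizing v with
  | zero => simp [subtree] at hx
  | succ g ih =>
    rcases mem_subtree_succ.1 hx with rfl | ⟨k, hk, hx⟩
    · exact le_rfl
    · have := ih hx
      have : v ≤ d * v := Nat.le_mul_of_pos_left v (by omega)
      omega

theorem lt_of_mem_subtree (hd : 0 < d) {v g x : ℕ} (hx : x ∈ subtree d v (g + 1)) :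
    x < d ^ g * (v + 1) + treeSize d g := by
  induction g generalizing v with
  | zero => simp [subtree, treeSize] at hx ⊢; omega
  | succ g ih =>
    rcases mem_subtree_succ.1 hx with rfl | ⟨k, hk, hx⟩
    · have : x + 1 ≤ d ^ (g + 1) * (x + 1) := Nat.le_mul_of_pos_left _ (by positivity)
      omega
    · calc x < d ^ g * (d * v + 1 + k + 1) + treeSize d g := ih hx
        _ ≤ d ^ g * (d * v + d + 1) + treeSize d g := by
          have : d * v + 1 + k + 1 ≤ d * v + d + 1 := by omega
          gcongr
        _ = d ^ (g + 1) * (v + 1) + treeSize d (g + 1) := by rw [treeSize_succ]; ring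

theorem subtree_zero_subset_range (hd : 0 < d) (g : ℕ) :
    subtree d 0 (g + 1) ⊆ range (treeSize d (g + 1)) := fun x hx => by
  have := lt_of_mem_subtree hd hx
  rw [mem_range, treeSize_succ]
  omega

/-- The invariant `v₁ < v₂ ≤ d * v₁` holds for siblings and is inherited by every pair of their
children. -/
theorem disjoint_subtree {v₁ v₂ : ℕ} (h₁₂ : v₁ < v₂) (h₂₁ : v₂ ≤ d * v₁) (g : ℕ) :
    Disjoint (subtree d v₁ g) (subtree d v₂ g) := by
  induction g generalizing v₁ v₂ with
  | zero => simp [subtree]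
  | succ g ih =>
    have hd : 0 < d := Nat.pos_of_ne_zero fun hd => by simp [hd] at h₂₁; omega
    have hv₂ : v₂ ≤ d * v₂ := Nat.le_mul_of_pos_left v₂ hd
    simp only [subtree, disjoint_insert_left, disjoint_insert_right, disjoint_biUnion_left,
      disjoint_biUnion_right, mem_insert, mem_biUnion, mem_range, not_or, not_exists, not_and]
    refine ⟨⟨h₁₂.ne', fun k _ hx => ?_⟩, fun k _ => ⟨fun hx => ?_, fun k' _ => ih ?_ ?_⟩⟩
    · have := le_of_mem_subtree hx
      omega
    · have := le_of_mem_subtree hx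
      omega
    · have : d * (v₁ + 1) ≤ d * v₂ := Nat.mul_le_mul_left d h₁₂
      rw [mul_add_one] at this
      omega
    · have : d * v₂ ≤ d * (d * v₁) := Nat.mul_le_mul_left d h₂₁
      nlinarith

theorem pairwiseDisjoint_subtree_children (v g : ℕ) :
    (range d : Set ℕ).PairwiseDisjoint fun k => subtree d (d * v + 1 + k) g := by
  have hsib : ∀ k₁ k₂, k₁ < k₂ → k₂ < d →
      Disjoint (subtree d (d * v + 1 + k₁) g) (subtree d (d * v + 1 + k₂) g) :=
    fun k₁ k₂ h₁₂ h₂ => disjoint_subtree (by omega)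
      (by nlinarith [Nat.le_mul_of_pos_left (d * v) (show 0 < d by omega)]) g
  intro k₁ hk₁ k₂ hk₂ hne
  simp only [coe_range, Set.mem_Iio] at hk₁ hk₂
  rcases Nat.lt_or_gt_of_ne hne with h | h
  · exact hsib k₁ k₂ h hk₂
  · exact (hsib k₂ k₁ h hk₁).symm

end Subtree

theorem weightOn_eq_zero_iff {s : Finset ℕ} {c : BCfg} :
    weightOn s c = 0 ↔ ∀ x ∈ s, c x = false := by
  simp [weightOn]

theorem weightOn_mono {s t : Finset ℕ} (hst : s ⊆ t) (c : BCfg) : weightOn s c ≤ weightOn t c :=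
  sum_le_sum_of_subset hst

theorem weightOn_subtree_succ (c : BCfg) (d v g : ℕ) :
    weightOn (subtree d v (g + 1)) c =
      (if c v then 1 else 0) + ∑ k ∈ range d, weightOn (subtree d (d * v + 1 + k) g) c := by
  have hv : v ∉ (range d).biUnion fun k => subtree d (d * v + 1 + k) g := by
    simp only [mem_biUnion, mem_range, not_exists, not_and]
    intro k hk hv
    have := le_of_mem_subtree hv
    have : v ≤ d * v := Nat.le_mul_of_pos_left v (by omega)
    omega
  rw [weightOn, subtree, sum_insert hv, sum_biUnion (pairwiseDisjoint_subtree_children v g)]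
  rfl

theorem add_card_sub_one_le_sum {ι : Type*} [DecidableEq ι] {s : Finset ι} {f : ι → ℕ} {i : ι}
    (hi : i ∈ s) {m : ℕ} (hm : m ≤ f i) (hothers : ∀ j ∈ s, 1 ≤ f j) :
    m + (#s - 1) ≤ ∑ j ∈ s, f j := by
  rw [← add_sum_erase s f hi, ← card_erase_of_mem hi]
  have := card_nsmul_le_sum (s.erase i) f 1 fun j hj => hothers j (mem_of_mem_erase hj)
  exact add_le_add hm (by simpa using this)

theorem exists_last_of_le {P : ℕ → Prop} {a b : ℕ} (hab : a ≤ b) (ha : P a) :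
    ∃ r, a ≤ r ∧ r ≤ b ∧ P r ∧ ∀ s, r < s → s ≤ b → ¬ P s := by
  classical
  exact ⟨Nat.findGreatest P b, Nat.le_findGreatest hab ha, Nat.findGreatest_le b,
    Nat.findGreatest_spec hab ha, fun _ h₁ h₂ => Nat.findGreatest_is_greatest h₁ h₂⟩

theorem BMove.bcovered_of_pebble_s3 {d n v : ℕ} {c c' : BCfg} (hm : BMove d n c c')
    (hv : c v = false) (hv' : c' v = true) (hleaf : ¬ isLeaf d n v) : bcovered d c v := by
  rcases hm with ⟨i, rfl⟩ | ⟨i, -, hcov, -, hrest⟩ | ⟨i, hi, rfl⟩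
  · by_cases hiv : v = i
    · simp [hiv] at hv'
    · simp [hiv, hv] at hv'
  · by_cases hiv : v = i
    · exact hiv ▸ hcov
    · rcases hrest v hiv with h | ⟨-, h⟩ <;> simp_all
  · by_cases hiv : v = i
    · exact absurd (hiv ▸ hi) hleaf
    · simp [hiv, hv] at hv'

theorem not_isLeaf_of_subtree_subset {d n v g : ℕ} (hd : 0 < d)
    (hsub : subtree d v (g + 2) ⊆ range n) : ¬ isLeaf d n v := fun hleaf => by
  have := mem_range.1 (hsub (subtree_child_subset hd (g + 1) (self_mem_subtree _ g)))
  have := hleaf.2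
  omega

theorem BPebbling.exists_le_weightOn_subtree {d n T : ℕ} {c : ℕ → BCfg}
    (hpeb : BPebbling d n T c) (hd : 0 < d) (g : ℕ) {v a b : ℕ}
    (hsub : subtree d v (g + 1) ⊆ range n) (hab : a ≤ b) (hbT : b ≤ T)
    (hempty : weightOn (subtree d v (g + 1)) (c a) = 0) (hv : c b v = true) :
    ∃ u, a ≤ u ∧ u ≤ b ∧ (d - 1) * g + 1 ≤ weightOn (subtree d v (g + 1)) (c u) := by
  induction g generalizing v a b with
  | zero => exact ⟨b, hab, le_rfl, by rw [weightOn, subtree_one, sum_singleton, hv]; simp⟩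
  | succ g ih =>
    obtain ⟨t, hat, htb, hvt, hnext⟩ := exists_last_of_le (P := fun s => c s v = false) hab
      (weightOn_eq_zero_iff.1 hempty v (self_mem_subtree v _))
    have htb' : t < b := lt_of_le_of_ne htb fun h => by simp_all
    have hcov : bcovered d (c t) v :=
      (hpeb t (by omega)).bcovered_of_pebble_s3 hvt (by simpa using hnext (t + 1) (by omega) htb')
        (not_isLeaf_of_subtree_subset hd hsub)
    set w : ℕ → ℕ → ℕ := fun k s => weightOn (subtree d (d * v + 1 + k) (g + 1)) (c s)
    have hchild_empty : ∀ k < d, w k a = 0 := fun k hk =>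
      Nat.eq_zero_of_le_zero (hempty ▸ weightOn_mono (subtree_child_subset hk _) (c a))
    obtain ⟨r, har, hrt, ⟨k₀, hk₀, hr⟩, hafter⟩ :=
      exists_last_of_le (P := fun s => ∃ k < d, w k s = 0) hat ⟨0, hd, hchild_empty 0 hd⟩
    obtain ⟨u, hru, hut, hu⟩ := ih ((subtree_child_subset hk₀ _).trans hsub) hrt (by omega) hr
      (hcov _ ⟨k₀, hk₀, rfl⟩)
    have hru' : r < u := lt_of_le_of_ne hru fun h => by
      subst h
      simp only [w] at hr
      omega
    have hothers : ∀ k ∈ range d, 1 ≤ w k u := fun k hk => by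
      by_contra! h
      exact hafter u hru' hut ⟨k, mem_range.1 hk, by omega⟩
    refine ⟨u, by omega, by omega, ?_⟩
    calc (d - 1) * (g + 1) + 1 = ((d - 1) * g + 1) + (#(range d) - 1) := by
          rw [card_range]; ring
      _ ≤ ∑ k ∈ range d, w k u := add_card_sub_one_le_sum (mem_range.2 hk₀) hu hothers
      _ ≤ weightOn (subtree d v (g + 2)) (c u) := by
          rw [weightOn_subtree_succ]
          exact Nat.le_add_left _ _

/-- every black root-pebbling of the d-ary tree of height h ≥ 2
(d ≥ 2) uses at least (d-1)(h-1)+1 pebbles at some time. -/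
theorem black_lower_dary (d h : ℕ) (hd : 2 ≤ d) (hh : 2 ≤ h) (T : ℕ) (c : ℕ → BCfg)
    (hp : BRootPebbling d (treeSize d h) T c) :
    ∃ t, t ≤ T ∧ (d - 1) * (h - 1) + 1 ≤ bweight (treeSize d h) (c t) := by
  obtain ⟨hpeb, hstart, -, t, htT, hroot⟩ := hp
  obtain ⟨g, rfl⟩ : ∃ g, h = g + 1 := ⟨h - 1, by omega⟩
  have hsub := subtree_zero_subset_range (by omega : 0 < d) g
  obtain ⟨u, -, hut, hu⟩ := hpeb.exists_le_weightOn_subtree (by omega) g hsub (Nat.zero_le t) htT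
    (weightOn_eq_zero_iff.2 fun x _ => hstart x) hroot
  refine ⟨u, hut.trans htT, ?_⟩
  rw [add_tsub_cancel_right]
  exact hu.trans (weightOn_mono hsub (c u))
end

section
/- In any whole black-white pebbling of the balanced binary tree of height 3 that starts and ends with no pebbles and pebbles the root at some time, there is a time at which the total pebble weight is at least 3. -/
/-- A black-white configuration: each node gets (black, white) ∈ {0,1}². -/
abbrev BWCfg := ℕ → Bool × Bool

/-- Pebble weight of node i. -/
def bwpw (c : BWCfg) (i : ℕ) : ℕ :=
  (if (c i).1 then 1 else 0) + (if (c i).2 then 1 else 0)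

/-- b(i) + w(i) ≤ 1 for all nodes. -/
def bwValid (c : BWCfg) : Prop := ∀ i, ¬((c i).1 = true ∧ (c i).2 = true)

def bwweight (n : ℕ) (c : BWCfg) : ℕ := ∑ i ∈ Finset.range n, bwpw c i

/-- Every child of i has pebble weight 1. -/
def bwcovered (d : ℕ) (c : BWCfg) (i : ℕ) : Prop := ∀ j, child d i j → bwpw c j = 1

/-- Legal whole black-white pebbling moves: remove a black pebble; on a node
whose children all have pebble weight 1, set w(i)=0 and/or set b(i)=1, optionally
simultaneously removing black pebbles from any children; place a white pebble
anywhere; place a black pebble on any leaf. -/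
def BWMove (d n : ℕ) (c c' : BWCfg) : Prop :=
  (∃ i, c' = Function.update c i (false, (c i).2)) ∨
  (∃ i, i < n ∧ bwcovered d c i ∧ (c' i = (true, false) ∨ c' i = ((c i).1, false)) ∧
    (∀ j, child d i j → (c' j = c j ∨ c' j = (false, (c j).2))) ∧
    (∀ j, j ≠ i → ¬ child d i j → c' j = c j)) ∨
  (∃ i, i < n ∧ c' = Function.update c i ((c i).1, true)) ∨
  (∃ i, isLeaf d n i ∧ c' = Function.update c i (true, (c i).2))

def BWPebbling (d n T : ℕ) (c : ℕ → BWCfg) : Prop :=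
  (∀ t, t ≤ T → bwValid (c t)) ∧ (∀ t, t < T → BWMove d n (c t) (c (t + 1)))

def BWEmpty (c : BWCfg) : Prop := ∀ i, c i = (false, false)

/-- Root-pebbling: starts and ends empty; at some time the root has pebble weight 1. -/
def BWRootPebbling (d n T : ℕ) (c : ℕ → BWCfg) : Prop :=
  BWPebbling d n T c ∧ BWEmpty (c 0) ∧ BWEmpty (c T) ∧ ∃ t, t ≤ T ∧ bwpw (c t) 0 = 1

/-! Suppose the weight never reaches 3. A white pebble on an internal node must eventually be
removed, and at that moment the node and both its children are pebbled; so internal nodes only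
ever carry black pebbles. The root is therefore blackened at a time when both of its children are
black. Tracing back, the two children were blackened by two different moves, and at the later one
the other child is still black while both children of the node being blackened are pebbled:
weight 3. -/

theorem exists_last_not_of_le {Q : ℕ → Prop} {a b : ℕ} (hab : a ≤ b) (ha : ¬ Q a) (hb : Q b) :
    ∃ s, a ≤ s ∧ s < b ∧ ¬ Q s ∧ ∀ x, s < x → x ≤ b → Q x := by
  induction b, hab using Nat.le_induction with
  | base => exact absurd hb ha
  | succ b hab ih =>
    by_cases hQ : Q b
    · obtain ⟨s, has, hsb, hs, hall⟩ := ih hQ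
      refine ⟨s, has, by omega, hs, fun x hsx hxb => ?_⟩
      rcases Nat.lt_or_ge x (b + 1) with hx | hx
      · exact hall x hsx (by omega)
      · rwa [show x = b + 1 by omega]
    · exact ⟨b, hab, by omega, hQ, fun x hbx hxb => by rwa [show x = b + 1 by omega]⟩

theorem bwpw_pos_iff {c : BWCfg} {k : ℕ} : 0 < bwpw c k ↔ (c k).1 = true ∨ (c k).2 = true := by
  unfold bwpw
  split_ifs <;> simp_all

theorem three_le_bwweight {n a i : ℕ} {c : BWCfg} (hi : i < n) (ha : 2 * a + 2 < n)
    (hi₁ : i ≠ 2 * a + 1) (hi₂ : i ≠ 2 * a + 2) (hpw : 0 < bwpw c i) (hcov : bwcovered 2 c a) :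
    3 ≤ bwweight n c := by
  have h₁ := hcov (2 * a + 1) ⟨0, by omega, by omega⟩
  have h₂ := hcov (2 * a + 2) ⟨1, by omega, by omega⟩
  calc 3 ≤ ∑ j ∈ {i, 2 * a + 1, 2 * a + 2}, bwpw c j := by
        rw [Finset.sum_insert (by simp [hi₁, hi₂]), Finset.sum_pair (by omega)]
        omega
    _ ≤ bwweight n c := Finset.sum_le_sum_of_subset fun j => by simp; omega

namespace BWMove

variable {d n : ℕ} {c c' : BWCfg}

theorem bwcovered_of_white_lost (h : BWMove d n c c') {k : ℕ} (hk : (c k).2 = true)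
    (hk' : (c' k).2 = false) : bwcovered d c k := by
  rcases h with ⟨i, rfl⟩ | ⟨i, -, hcov, -, hch, hoth⟩ | ⟨i, -, rfl⟩ | ⟨i, -, rfl⟩
  · by_cases hki : k = i <;> simp_all
  · obtain rfl | hki := eq_or_ne k i
    · exact hcov
    by_cases hck : child d i k
    · rcases hch k hck with h | h <;> simp_all
    · simp_all
  · by_cases hki : k = i <;> simp_all
  · by_cases hki : k = i <;> simp_all

theorem black_gained (h : BWMove d n c c') {k : ℕ} (hk : (c k).1 = false)
    (hk' : (c' k).1 = true) :
    (bwcovered d c k ∨ isLeaf d n k) ∧ ∀ l, (c l).1 = false → (c' l).1 = true → l = k := by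
  suffices ∃ i, (bwcovered d c i ∨ isLeaf d n i) ∧
      ∀ l, (c l).1 = false → (c' l).1 = true → l = i by
    obtain ⟨i, hi, huniq⟩ := this
    obtain rfl := huniq k hk hk'
    exact ⟨hi, huniq⟩
  rcases h with ⟨i, rfl⟩ | ⟨i, -, hcov, -, hch, hoth⟩ | ⟨i, -, rfl⟩ | ⟨i, hleaf, rfl⟩
  · by_cases hki : k = i <;> simp_all
  · refine ⟨i, .inl hcov, fun l hl hl' => ?_⟩
    by_contra hli
    by_cases hcl : child d i l
    · rcases hch l hcl with h | h <;> simp_all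
    · simp_all
  · by_cases hki : k = i <;> simp_all
  · refine ⟨i, .inr hleaf, fun l hl hl' => ?_⟩
    by_contra hli
    simp_all

end BWMove

namespace BWRootPebbling

variable {d n T : ℕ} {c : ℕ → BWCfg}

theorem exists_white_removal (hp : BWRootPebbling d n T c) {a v : ℕ} (hv : v ≤ T)
    (hw : (c v a).2 = true) : ∃ u, u < T ∧ (c u a).2 = true ∧ bwcovered d (c u) a := by
  obtain ⟨u, -, huT, hu, hafter⟩ := exists_last_not_of_le (Q := fun t => (c t a).2 = false) hv
    (by simpa using hw) (by simp [hp.2.2.1 a])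
  have hu : (c u a).2 = true := by simpa using hu
  exact ⟨u, huT, hu, (hp.1.2 u huT).bwcovered_of_white_lost hu (hafter (u + 1) (by omega) huT)⟩

theorem exists_black_placement (hp : BWRootPebbling d n T c) {a s : ℕ} (ha : ¬ isLeaf d n a)
    (hs : s ≤ T) (hb : (c s a).1 = true) :
    ∃ r < s, bwcovered d (c r) a ∧ (c r a).1 = false ∧ (c (r + 1) a).1 = true ∧
      ∀ x, r < x → x ≤ s → (c x a).1 = true := by
  obtain ⟨r, -, hrs, hr, hafter⟩ := exists_last_not_of_le (Q := fun t => (c t a).1 = true)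
    (Nat.zero_le s) (by simp [hp.2.1 a]) hb
  have hr : (c r a).1 = false := by simpa using hr
  have hr' : (c (r + 1) a).1 = true := hafter (r + 1) (by omega) hrs
  have hcov := (((hp.1.2 r (by omega)).black_gained hr hr').1).resolve_right ha
  exact ⟨r, hrs, hcov, hr, hr', hafter⟩

theorem black_of_bwpw_pos (hp : BWRootPebbling 2 n T c) (hlight : ∀ t ≤ T, bwweight n (c t) < 3)
    {t a : ℕ} (ht : t ≤ T) (ha : 2 * a + 2 < n) (hpw : 0 < bwpw (c t) a) : (c t a).1 = true := by
  refine (bwpw_pos_iff.1 hpw).resolve_right fun hw => ?_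
  obtain ⟨u, huT, hu, hcov⟩ := hp.exists_white_removal ht hw
  exact (hlight u huT.le).not_ge
    (three_le_bwweight (by omega) ha (by omega) (by omega) (bwpw_pos_iff.2 (.inr hu)) hcov)

end BWRootPebbling

/-- every whole black-white root-pebbling of the binary tree of
height 3 uses total pebble weight at least 3 at some time. -/
theorem bw_lower_height3 (T : ℕ) (c : ℕ → BWCfg)
    (hp : BWRootPebbling 2 (treeSize 2 3) T c) :
    ∃ t, t ≤ T ∧ 3 ≤ bwweight (treeSize 2 3) (c t) := by
  rw [show treeSize 2 3 = 7 by decide] at hp ⊢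
  by_contra! hlight
  have internal {a : ℕ} (ha : a ≤ 2) : ¬ isLeaf 2 7 a := by rintro ⟨-, h⟩; omega
  have black {t a j : ℕ} (ht : t ≤ T) (hcov : bwcovered 2 (c t) a) (hj : child 2 a j)
      (hj₂ : j ≤ 2) : (c t j).1 = true :=
    hp.black_of_bwpw_pos hlight ht (by omega) (by rw [hcov j hj]; exact one_pos)
  obtain ⟨t, ht, hroot⟩ := hp.2.2.2
  obtain ⟨s, hs, hcov, -⟩ := hp.exists_black_placement (internal (a := 0) (by omega)) ht
    (hp.black_of_bwpw_pos hlight ht (by omega) (by omega))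
  obtain ⟨s₁, hs₁, hcov₁, hoff₁, hon₁, hblack₁⟩ := hp.exists_black_placement (internal (a := 1)
    (by omega)) (by omega) (black (by omega) hcov ⟨0, by omega, rfl⟩ (by omega))
  obtain ⟨s₂, hs₂, hcov₂, hoff₂, hon₂, hblack₂⟩ := hp.exists_black_placement (internal (a := 2)
    (by omega)) (by omega) (black (by omega) hcov ⟨1, by omega, rfl⟩ (by omega))
  -- whichever child is blackened second finds its sibling still black
  rcases lt_trichotomy s₁ s₂ with h | rfl | h
  · exact (hlight s₂ (by omega)).not_ge (three_le_bwweight (i := 1) (by omega) (by omega)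
      (by omega) (by omega) (bwpw_pos_iff.2 (.inl (hblack₁ s₂ h (by omega)))) hcov₂)
  · exact absurd (((hp.1.2 s₁ (by omega)).black_gained hoff₁ hon₁).2 2 hoff₂ hon₂) (by omega)
  · exact (hlight s₁ (by omega)).not_ge (three_le_bwweight (i := 2) (by omega) (by omega)
      (by omega) (by omega) (bwpw_pos_iff.2 (.inl (hblack₂ s₁ h (by omega)))) hcov₁)
end

section
/- There exists a half pebbling (fractional pebbling with all weights in {0, 1/2, 1}) of the balanced binary tree of height h ≥ 2 that starts with no pebbles, ends with no pebbles, at some time has pebble weight 1 on the root, and uses total pebble weight at most h/2 + 1 at every time. -/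
/-- A fractional configuration: each node gets (black weight, white weight). -/
abbrev Cfg := ℕ → ℝ × ℝ

/-- Pebble weight of node i: b(i) + w(i). -/
def pw (c : Cfg) (i : ℕ) : ℝ := (c i).1 + (c i).2

/-- Valid configuration: weights nonnegative, b(i)+w(i) ≤ 1, nothing outside the tree. -/
def Valid (n : ℕ) (c : Cfg) : Prop :=
  (∀ i, 0 ≤ (c i).1 ∧ 0 ≤ (c i).2 ∧ pw c i ≤ 1) ∧ (∀ i, n ≤ i → c i = (0, 0))

/-- Total pebble weight of a configuration. -/
def weight (n : ℕ) (c : Cfg) : ℝ := ∑ i ∈ Finset.range n, pw c i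

/-- Every child of i has pebble weight 1. -/
def covered (d : ℕ) (c : Cfg) (i : ℕ) : Prop := ∀ j, child d i j → pw c j = 1

/-- Legal fractional pebbling moves: decrease black weight on any node; on a node
whose children all have pebble weight 1, set its white weight to 0 and increase its
black weight arbitrarily, optionally simultaneously decreasing children's black
weights (sliding); increase white weight on any node (subject to validity);
increase black weight on any leaf. -/
def Move (d n : ℕ) (c c' : Cfg) : Prop :=
  (∃ i, (c' i).1 ≤ (c i).1 ∧ (c' i).2 = (c i).2 ∧ ∀ j, j ≠ i → c' j = c j) ∨
  (∃ i, i < n ∧ covered d c i ∧ (c i).1 ≤ (c' i).1 ∧ (c' i).2 = 0 ∧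
    (∀ j, child d i j → (c' j).1 ≤ (c j).1 ∧ (c' j).2 = (c j).2) ∧
    (∀ j, j ≠ i → ¬ child d i j → c' j = c j)) ∨
  (∃ i, (c' i).1 = (c i).1 ∧ (c i).2 ≤ (c' i).2 ∧ ∀ j, j ≠ i → c' j = c j) ∨
  (∃ i, isLeaf d n i ∧ (c' i).2 = (c i).2 ∧ (c i).1 ≤ (c' i).1 ∧ ∀ j, j ≠ i → c' j = c j)

/-- A fractional pebbling: valid configurations connected by legal moves. -/
def Pebbling (d n T : ℕ) (c : ℕ → Cfg) : Prop :=
  (∀ t, t ≤ T → Valid n (c t)) ∧ (∀ t, t < T → Move d n (c t) (c (t + 1)))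

def EmptyCfg (c : Cfg) : Prop := ∀ i, c i = (0, 0)

/-- Root-pebbling: starts and ends empty; at some time the root has pebble weight 1. -/
def RootPebbling (d n T : ℕ) (c : ℕ → Cfg) : Prop :=
  Pebbling d n T c ∧ EmptyCfg (c 0) ∧ EmptyCfg (c T) ∧ ∃ t, t ≤ T ∧ pw (c t) 0 = 1

/-- x is a half-pebbling value. -/
def HalfVal (x : ℝ) : Prop := x = 0 ∨ x = 1 / 2 ∨ x = 1

/-- Half pebbling moves: like fractional moves, except white weight is added so
that the node's pebble weight becomes exactly 1. -/
def MoveH (d n : ℕ) (c c' : Cfg) : Prop :=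
  (∃ i, (c' i).1 ≤ (c i).1 ∧ (c' i).2 = (c i).2 ∧ ∀ j, j ≠ i → c' j = c j) ∨
  (∃ i, i < n ∧ covered d c i ∧ (c i).1 ≤ (c' i).1 ∧ (c' i).2 = 0 ∧
    (∀ j, child d i j → (c' j).1 ≤ (c j).1 ∧ (c' j).2 = (c j).2) ∧
    (∀ j, j ≠ i → ¬ child d i j → c' j = c j)) ∨
  (∃ i, (c' i).1 = (c i).1 ∧ (c i).2 ≤ (c' i).2 ∧ pw c' i = 1 ∧ ∀ j, j ≠ i → c' j = c j) ∨
  (∃ i, isLeaf d n i ∧ (c' i).2 = (c i).2 ∧ (c i).1 ≤ (c' i).1 ∧ ∀ j, j ≠ i → c' j = c j)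

/-- A half pebbling: all weights in {0, 1/2, 1}, valid, connected by half moves. -/
def HPebbling (d n T : ℕ) (c : ℕ → Cfg) : Prop :=
  (∀ t, t ≤ T → Valid n (c t) ∧ ∀ i, HalfVal ((c t) i).1 ∧ HalfVal ((c t) i).2) ∧
  (∀ t, t < T → MoveH d n (c t) (c (t + 1)))

/-!
The pebbling is built by recursion on the height of subtrees. To put a black pebble on a node `v`
with children `a` and `b`: place a black half-pebble on `a` (pebble `a`, lower it to a half and
clear what was left below `a`), pebble `b` while keeping this half-pebble, add a white
half-pebble on `a`, and slide onto `v`. This leaves behind a white half-pebble on `a` together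
with whatever the pebbling of `b` left below `b`: one half-pebble per level, `(k - 2) / 2` in
total for a subtree of height `k`. These debts are cleared later by recursively clearing those
below `b` and then removing the white half-pebble on `a`, which is done like pebbling `a` except
that the final slide puts nothing on `a`. Every phase on a subtree of height `k` uses at most
`k / 2 + 1` on top of the rest of the configuration, which gives `h / 2 + 1` at the root.
-/

open Function Relation

namespace Relation.ReflTransGen

variable {α : Type*} {r : α → α → Prop} {a b c : α}

theorem exists_seq (h : ReflTransGen r a b) :
    ∃ (T : ℕ) (s : ℕ → α), s 0 = a ∧ s T = b ∧ ∀ t < T, r (s t) (s (t + 1)) := by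
  induction h using head_induction_on with
  | refl => exact ⟨0, fun _ => b, rfl, rfl, by simp⟩
  | @head a a' haa' _ ih =>
    obtain ⟨T, s, hs0, hsT, hs⟩ := ih
    refine ⟨T + 1, fun | 0 => a | t + 1 => s t, rfl, hsT, ?_⟩
    rintro (_ | t) ht
    · simpa [hs0] using haa'
    · exact hs t (by omega)

theorem exists_seq_through (hab : ReflTransGen r a b) (hbc : ReflTransGen r b c) :
    ∃ (T : ℕ) (s : ℕ → α), s 0 = a ∧ s T = c ∧ (∃ t ≤ T, s t = b) ∧
      ∀ t < T, r (s t) (s (t + 1)) := by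
  induction hab using head_induction_on with
  | refl =>
    obtain ⟨T, s, hs0, hsT, hs⟩ := hbc.exists_seq
    exact ⟨T, s, hs0, hsT, ⟨0, by omega, hs0⟩, hs⟩
  | @head a a' haa' _ ih =>
    obtain ⟨T, s, hs0, hsT, ⟨t₀, ht₀, hst₀⟩, hs⟩ := ih
    refine ⟨T + 1, fun | 0 => a | t + 1 => s t, rfl, hsT, ⟨t₀ + 1, by omega, hst₀⟩, ?_⟩
    rintro (_ | t) ht
    · simpa [hs0] using haa'
    · exact hs t (by omega)

end Relation.ReflTransGen

theorem lt_of_child {d i j : ℕ} (h : child d i j) : i < j := by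
  obtain ⟨k, hk, rfl⟩ := h
  nlinarith

theorem lt_of_transGen_child {d i j : ℕ} (h : TransGen (child d) i j) : i < j := by
  induction h with
  | single h => exact lt_of_child h
  | tail _ h ih => exact ih.trans (lt_of_child h)

theorem child_two_iff {v j : ℕ} : child 2 v j ↔ j = 2 * v + 1 ∨ j = 2 * v + 2 := by
  constructor
  · rintro ⟨k, hk, rfl⟩
    omega
  · rintro (rfl | rfl)
    exacts [⟨0, by omega, rfl⟩, ⟨1, by omega, rfl⟩]

theorem treeSize_two_add_one (h : ℕ) : treeSize 2 h + 1 = 2 ^ h := by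
  induction h with
  | zero => simp [treeSize]
  | succ h ih =>
    rw [treeSize, Finset.sum_range_succ, ← treeSize, pow_succ]
    omega

def AtDepth (d v : ℕ) : Prop := 2 ^ d ≤ v + 1 ∧ v + 1 < 2 ^ (d + 1)

theorem AtDepth.left_child {d v : ℕ} (h : AtDepth d v) : AtDepth (d + 1) (2 * v + 1) := by
  unfold AtDepth at *
  rw [pow_succ] at *
  omega

theorem AtDepth.right_child {d v : ℕ} (h : AtDepth d v) : AtDepth (d + 1) (2 * v + 2) := by
  unfold AtDepth at *
  rw [pow_succ] at *
  omega

theorem AtDepth.lt {d v h n : ℕ} (hv : AtDepth d v) (hn : n + 1 = 2 ^ h) (hd : d < h) :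
    v < n := by
  have : 2 ^ (d + 1) ≤ 2 ^ h := Nat.pow_le_pow_right (by norm_num) hd
  unfold AtDepth at hv
  omega

theorem AtDepth.isLeaf {d v n : ℕ} (h : AtDepth d v) (hn : n + 1 = 2 ^ (d + 1)) :
    isLeaf 2 n v := by
  unfold AtDepth at h
  rw [pow_succ] at *
  constructor <;> omega

theorem HalfVal.nonneg {x : ℝ} (h : HalfVal x) : 0 ≤ x := by
  rcases h with rfl | rfl | rfl <;> norm_num

theorem HalfVal.le_one {x : ℝ} (h : HalfVal x) : x ≤ 1 := by
  rcases h with rfl | rfl | rfl <;> norm_num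

theorem halfVal_zero : HalfVal 0 := Or.inl rfl

theorem halfVal_half : HalfVal (1 / 2) := Or.inr (Or.inl rfl)

theorem halfVal_one : HalfVal 1 := Or.inr (Or.inr rfl)

theorem pw_add (c c' : Cfg) (i : ℕ) : pw (c + c') i = pw c i + pw c' i := by
  simp only [pw, Pi.add_apply, Prod.fst_add, Prod.snd_add]
  ring

theorem pw_update (c : Cfg) (i : ℕ) (p : ℝ × ℝ) (j : ℕ) :
    pw (update c i p) j = update (pw c) i (p.1 + p.2) j := by
  by_cases h : j = i
  · subst h
    simp [pw]
  · simp [pw, h]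

theorem weight_add (n : ℕ) (c c' : Cfg) : weight n (c + c') = weight n c + weight n c' := by
  simp only [weight, pw_add, Finset.sum_add_distrib]

theorem weight_update (n : ℕ) (c : Cfg) {i : ℕ} (hi : i < n) (p : ℝ × ℝ) :
    weight n (update c i p) = weight n c - pw c i + (p.1 + p.2) := by
  have hmem : i ∈ Finset.range n := Finset.mem_range.2 hi
  simp only [weight, pw_update]
  rw [Finset.sum_update_of_mem hmem, Finset.sum_eq_add_sum_sdiff_singleton_of_mem hmem (pw c)]
  ring

theorem update_add_of_eq_zero {c d : Cfg} {i : ℕ} (hd : d i = 0) (p : ℝ × ℝ) :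
    update (c + d) i p = update c i p + d := by
  ext1 j
  by_cases hj : j = i
  · subst hj
    simp [hd]
  · simp [hj]

theorem weight_zero (n : ℕ) : weight n 0 = 0 := by
  simp [weight, pw]

def IsHalfCfg (n : ℕ) (c : Cfg) : Prop :=
  Valid n c ∧ ∀ i, HalfVal (c i).1 ∧ HalfVal (c i).2

theorem isHalfCfg_zero (n : ℕ) : IsHalfCfg n 0 :=
  ⟨⟨fun _ => by simp [pw], fun _ _ => rfl⟩, fun _ => ⟨halfVal_zero, halfVal_zero⟩⟩

theorem IsHalfCfg.pw_nonneg {n : ℕ} {c : Cfg} (hc : IsHalfCfg n c) (i : ℕ) : 0 ≤ pw c i :=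
  add_nonneg (hc.2 i).1.nonneg (hc.2 i).2.nonneg

theorem IsHalfCfg.update {n i : ℕ} {c : Cfg} {p : ℝ × ℝ} (hc : IsHalfCfg n c) (hi : i < n)
    (h₁ : HalfVal p.1) (h₂ : HalfVal p.2) (hp : p.1 + p.2 ≤ 1) :
    IsHalfCfg n (update c i p) := by
  obtain ⟨⟨hle, hout⟩, hhalf⟩ := hc
  refine ⟨⟨fun j => ?_, fun j hj => ?_⟩, fun j => ?_⟩
  · by_cases h : j = i
    · subst h
      simpa [pw] using ⟨h₁.nonneg, h₂.nonneg, hp⟩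
    · simpa [pw, h] using hle j
  · simpa [show j ≠ i by omega] using hout j hj
  · by_cases h : j = i
    · subst h
      simpa using ⟨h₁, h₂⟩
    · simpa [h] using hhalf j

section Moves

variable {d n i : ℕ} {c : Cfg} {p : ℝ × ℝ}

theorem moveH_update_of_fst_le (h₁ : p.1 ≤ (c i).1) (h₂ : p.2 = (c i).2) :
    MoveH d n c (update c i p) :=
  Or.inl ⟨i, by simpa using h₁, by simpa using h₂, fun j hj => update_of_ne hj _ _⟩

theorem moveH_update_of_pw_eq_one (h₁ : p.1 = (c i).1) (h₂ : (c i).2 ≤ p.2)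
    (hp : p.1 + p.2 = 1) : MoveH d n c (update c i p) :=
  Or.inr <| Or.inr <| Or.inl
    ⟨i, by simpa using h₁, by simpa using h₂, by simpa [pw] using hp,
      fun j hj => update_of_ne hj _ _⟩

theorem moveH_update_of_isLeaf (hi : isLeaf d n i) (h₁ : (c i).1 ≤ p.1) (h₂ : p.2 = (c i).2) :
    MoveH d n c (update c i p) :=
  Or.inr <| Or.inr <| Or.inr
    ⟨i, hi, by simpa using h₂, by simpa using h₁, fun j hj => update_of_ne hj _ _⟩

end Moves

def slide (v : ℕ) (p : ℝ × ℝ) (c : Cfg) : Cfg :=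
  update (update (update c v p) (2 * v + 1) (0, (c (2 * v + 1)).2))
    (2 * v + 2) (0, (c (2 * v + 2)).2)

theorem moveH_slide {n v : ℕ} {c : Cfg} {p : ℝ × ℝ} (hc : IsHalfCfg n c) (hv : v < n)
    (ha : pw c (2 * v + 1) = 1) (hb : pw c (2 * v + 2) = 1) (h₁ : (c v).1 ≤ p.1)
    (h₂ : p.2 = 0) :
    MoveH 2 n c (slide v p c) := by
  have hva : v ≠ 2 * v + 1 := by omega
  have hvb : v ≠ 2 * v + 2 := by omega
  have hab : 2 * v + 1 ≠ 2 * v + 2 := by omega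
  refine Or.inr <| Or.inl ⟨v, hv, ?_, ?_, ?_, ?_, ?_⟩
  · intro j hj
    rcases child_two_iff.1 hj with rfl | rfl
    exacts [ha, hb]
  · simpa [slide, hva, hvb] using h₁
  · simpa [slide, hva, hvb] using h₂
  · intro j hj
    rcases child_two_iff.1 hj with rfl | rfl
    · simpa [slide, hab, hva.symm] using (hc.1.1 _).1
    · simpa [slide, hvb.symm] using (hc.1.1 _).1
  · intro j hjv hj
    rw [child_two_iff, not_or] at hj
    simp [slide, hjv, hj.1, hj.2]

theorem IsHalfCfg.slide {n v : ℕ} {c : Cfg} {p : ℝ × ℝ} (hc : IsHalfCfg n c) (hv : v < n)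
    (hb : 2 * v + 2 < n) (hp₁ : HalfVal p.1) (hp₂ : p.2 = 0) : IsHalfCfg n (slide v p c) :=
  have hv' := hc.update hv hp₁ (hp₂ ▸ halfVal_zero) (by simpa [hp₂] using hp₁.le_one)
  have ha' := hv'.update (p := (0, (c (2 * v + 1)).2)) (by omega) halfVal_zero (hc.2 _).2
    (by simpa using (hc.2 _).2.le_one)
  ha'.update (p := (0, (c (2 * v + 2)).2)) hb halfVal_zero (hc.2 _).2
    (by simpa using (hc.2 _).2.le_one)

def Step (n : ℕ) (B : ℝ) (c c' : Cfg) : Prop :=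
  MoveH 2 n c c' ∧ IsHalfCfg n c' ∧ weight n c' ≤ B

abbrev Reach (n : ℕ) (B : ℝ) : Cfg → Cfg → Prop := ReflTransGen (Step n B)

section Reach

variable {n : ℕ} {B B' : ℝ} {c c' : Cfg}

theorem Reach.of_moveH (hm : MoveH 2 n c c') (hc' : IsHalfCfg n c') (hw : weight n c' ≤ B) :
    Reach n B c c' :=
  ReflTransGen.single ⟨hm, hc', hw⟩

theorem Reach.mono (h : Reach n B c c') (hB : B ≤ B') : Reach n B' c c' :=
  ReflTransGen.mono (fun _ _ hs => ⟨hs.1, hs.2.1, hs.2.2.trans hB⟩) _ _ h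

theorem Reach.isHalfCfg (h : Reach n B c c') (hc : IsHalfCfg n c) : IsHalfCfg n c' := by
  induction h with
  | refl => exact hc
  | tail _ hs _ => exact hs.2.1

end Reach

def VanishesBelow (v : ℕ) (c : Cfg) : Prop := ∀ j, TransGen (child 2) v j → c j = 0

theorem VanishesBelow.left {v : ℕ} {c : Cfg} (h : VanishesBelow v c) :
    VanishesBelow (2 * v + 1) c :=
  fun j hj => h j (TransGen.head (child_two_iff.2 (Or.inl rfl)) hj)

theorem VanishesBelow.right {v : ℕ} {c : Cfg} (h : VanishesBelow v c) :
    VanishesBelow (2 * v + 2) c :=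
  fun j hj => h j (TransGen.head (child_two_iff.2 (Or.inr rfl)) hj)

theorem VanishesBelow.update {v i : ℕ} {c : Cfg} (h : VanishesBelow v c) (hi : i ≤ v)
    (p : ℝ × ℝ) : VanishesBelow v (update c i p) := fun j hj => by
  rw [update_of_ne (by have := lt_of_transGen_child hj; omega)]
  exact h j hj

/-- Pebbling procedures for the subtree of height `k` rooted at `v`, each running on top of an
arbitrary configuration `c` that vanishes below `v`. -/
structure Strategy (n k v : ℕ) where
  debt : Cfg
  isHalfCfg_debt : IsHalfCfg n debt
  debt_eq_zero : ∀ j, ¬ TransGen (child 2) v j → debt j = 0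
  weight_debt_le : weight n debt ≤ ((k : ℝ) - 2) / 2
  build : ∀ c, IsHalfCfg n c → c v = 0 → VanishesBelow v c →
    Reach n (weight n c + k / 2 + 1) c (update (c + debt) v (1, 0))
  cleanup : ∀ c, IsHalfCfg n c → VanishesBelow v c →
    Reach n (weight n c + k / 2 + 1) (c + debt) c
  discharge : ∀ c, IsHalfCfg n c → VanishesBelow v c → c v = (0, 1 / 2) →
    Reach n (weight n c + k / 2 + 1) c (update c v 0)

namespace Strategy

variable {n k v : ℕ}

theorem debt_eq_zero_of_le (S : Strategy n k v) {j : ℕ} (hj : j ≤ v) : S.debt j = 0 :=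
  S.debt_eq_zero j fun h => (lt_of_transGen_child h).not_ge hj

theorem reach_through_pebbled (S : Strategy n k v) (hv : v < n) {c : Cfg} (hc : IsHalfCfg n c)
    (hcv : c v = 0) (hcb : VanishesBelow v c) {p : ℝ × ℝ} (hp₁ : HalfVal p.1)
    (hp₂ : p.2 = 0) :
    Reach n (weight n c + p.1 + k / 2 + 1) c (update (c + S.debt) v (1, 0)) ∧
    Reach n (weight n c + p.1 + k / 2 + 1) (update (c + S.debt) v (1, 0)) (update c v p) := by
  have hbuild := S.build c hc hcv hcb
  set X := update (c + S.debt) v (1, 0)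
  have hX : IsHalfCfg n X := hbuild.isHalfCfg hc
  have hdrop_eq : update X v p = update c v p + S.debt := by
    rw [update_idem, update_add_of_eq_zero (S.debt_eq_zero_of_le le_rfl)]
  have hpw : pw c v = 0 := by simp [pw, hcv]
  refine ⟨hbuild.mono (by linarith [hp₁.nonneg]),
    ReflTransGen.head (b := update X v p) ⟨?_, ?_, ?_⟩ ?_⟩
  · exact moveH_update_of_fst_le (by simpa [X] using hp₁.le_one) (by simpa [X] using hp₂)
  · exact hX.update hv hp₁ (hp₂ ▸ halfVal_zero) (by linarith [hp₁.le_one])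
  · rw [hdrop_eq, weight_add, weight_update n c hv, hpw, hp₂]
    linarith [S.weight_debt_le]
  · rw [hdrop_eq]
    have := S.cleanup (update c v p) (hc.update hv hp₁ (hp₂ ▸ halfVal_zero)
      (by linarith [hp₁.le_one]))
      (hcb.update le_rfl p)
    rwa [weight_update n c hv, hpw, hp₂, sub_zero, add_zero] at this

theorem reach_halfBlack (S : Strategy n k v) (hv : v < n) {c : Cfg} (hc : IsHalfCfg n c)
    (hcv : c v = 0) (hcb : VanishesBelow v c) :
    Reach n (weight n c + 1 / 2 + k / 2 + 1) c (update c v (1 / 2, 0)) :=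
  let h := S.reach_through_pebbled hv hc hcv hcb (p := (1 / 2, 0)) halfVal_half rfl
  h.1.trans h.2

end Strategy

theorem slide_update_children {v : ℕ} {c : Cfg} (hca : c (2 * v + 1) = 0)
    (hcb : c (2 * v + 2) = 0) (p : ℝ × ℝ) :
    slide v p (update (update c (2 * v + 1) (1, 0)) (2 * v + 2) (1, 0)) = update c v p := by
  ext1 j
  simp only [slide, update_apply]
  split_ifs <;> first | omega | (subst_vars; simp_all)

theorem reach_update_of_isLeaf_children {n v : ℕ} (hv : v < n) (ha : isLeaf 2 n (2 * v + 1))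
    (hb : isLeaf 2 n (2 * v + 2)) {c : Cfg} (hc : IsHalfCfg n c) (hcv : VanishesBelow v c)
    {p : ℝ × ℝ} (hp₁ : HalfVal p.1) (hp₂ : p.2 = 0) (hle : (c v).1 ≤ p.1) :
    Reach n (weight n c + 2) c (update c v p) := by
  have hca : c (2 * v + 1) = 0 := hcv _ (.single (child_two_iff.2 (.inl rfl)))
  have hcb : c (2 * v + 2) = 0 := hcv _ (.single (child_two_iff.2 (.inr rfl)))
  set c₁ := update c (2 * v + 1) (1, 0)
  set c₂ := update c₁ (2 * v + 2) (1, 0)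
  have hc₁ : IsHalfCfg n c₁ := hc.update ha.1 halfVal_one halfVal_zero (by norm_num)
  have hc₂ : IsHalfCfg n c₂ := hc₁.update hb.1 halfVal_one halfVal_zero (by norm_num)
  have hc₁b : c₁ (2 * v + 2) = 0 := by simp [c₁, hcb]
  have hc₂v : c₂ v = c v := (update_of_ne (by omega) _ _).trans (update_of_ne (by omega) _ _)
  have hw₁ : weight n c₁ = weight n c + 1 := by
    rw [weight_update n c ha.1]
    simp [pw, hca]
  have hw₂ : weight n c₂ = weight n c + 2 := by
    rw [weight_update n c₁ hb.1, hw₁]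
    simp [pw, hc₁b]
    ring
  have hreach₁ : Reach n (weight n c + 2) c c₁ :=
    Reach.of_moveH (moveH_update_of_isLeaf ha (by simp [hca]) (by simp [hca])) hc₁
      (by linarith)
  have hreach₂ : Reach n (weight n c + 2) c₁ c₂ :=
    Reach.of_moveH (moveH_update_of_isLeaf hb (by simp [hc₁b]) (by simp [hc₁b])) hc₂ hw₂.le
  have hreach₃ : Reach n (weight n c + 2) c₂ (update c v p) := by
    refine Reach.of_moveH ?_ (hc.update hv hp₁ (hp₂ ▸ halfVal_zero) (by simpa [hp₂] using
      hp₁.le_one)) ?_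
    · rw [← slide_update_children hca hcb p]
      refine moveH_slide hc₂ hv ?_ ?_ (hc₂v ▸ hle) hp₂
      · simp [pw, c₂, c₁]
      · simp [pw, c₂]
    · rw [weight_update n c hv, hp₂]
      linarith [hc.pw_nonneg v, hp₁.le_one]
  exact hreach₁.trans (hreach₂.trans hreach₃)

def Strategy.ofLeaves {n v : ℕ} (hv : v < n) (ha : isLeaf 2 n (2 * v + 1))
    (hb : isLeaf 2 n (2 * v + 2)) : Strategy n 2 v where
  debt := 0
  isHalfCfg_debt := isHalfCfg_zero n
  debt_eq_zero _ _ := rfl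
  weight_debt_le := by simp [weight_zero]
  build c hc hcv hcb := by
    rw [add_zero]
    refine (reach_update_of_isLeaf_children hv ha hb hc hcb halfVal_one rfl ?_).mono ?_
    · simp [hcv]
    · push_cast; linarith
  cleanup c _ _ := by
    rw [add_zero]
  discharge c hc hcb hcv :=
    (reach_update_of_isLeaf_children hv ha hb hc hcb (p := 0) halfVal_zero rfl
      (by simp [hcv])).mono (by push_cast; linarith)

namespace Strategy

variable {n k v : ℕ}

noncomputable def succDebt (S : Strategy n k (2 * v + 2)) : Cfg :=
  update S.debt (2 * v + 1) (0, 1 / 2)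

theorem succDebt_self (S : Strategy n k (2 * v + 2)) : S.succDebt v = 0 := by
  rw [succDebt, update_of_ne (by omega)]
  exact S.debt_eq_zero_of_le (by omega)

theorem weight_succDebt (S : Strategy n k (2 * v + 2)) (ha : 2 * v + 1 < n) :
    weight n S.succDebt = weight n S.debt + 1 / 2 := by
  rw [succDebt, weight_update n _ ha]
  simp [pw, S.debt_eq_zero_of_le (show 2 * v + 1 ≤ 2 * v + 2 by omega)]

theorem slide_eq_update_add_succDebt (S : Strategy n k (2 * v + 2)) {c : Cfg}
    (hca : c (2 * v + 1) = 0) (hcb : c (2 * v + 2) = 0) (p : ℝ × ℝ) :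
    slide v p (update (update (update c (2 * v + 1) (1 / 2, 0) + S.debt) (2 * v + 2) (1, 0))
      (2 * v + 1) (1 / 2, 1 / 2)) = update (c + S.succDebt) v p := by
  have hda := S.debt_eq_zero_of_le (show 2 * v + 1 ≤ 2 * v + 2 by omega)
  have hdb := S.debt_eq_zero_of_le le_rfl
  ext1 j
  simp only [slide, succDebt, update_apply, Pi.add_apply]
  split_ifs <;> first | omega | (subst_vars; simp_all)

theorem reach_add_succDebt (Sa : Strategy n k (2 * v + 1)) (Sb : Strategy n k (2 * v + 2))
    (hb : 2 * v + 2 < n) {c : Cfg} (hc : IsHalfCfg n c) (hcv : VanishesBelow v c) :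
    Reach n (weight n c + k / 2 + 3 / 2) (c + Sb.succDebt) c := by
  have hca : c (2 * v + 1) = 0 := hcv _ (.single (child_two_iff.2 (.inl rfl)))
  set c' := update c (2 * v + 1) (0, 1 / 2)
  have hc' : IsHalfCfg n c' := hc.update (by omega) halfVal_zero halfVal_half (by norm_num)
  have hw' : weight n c' = weight n c + 1 / 2 := by
    rw [weight_update n c (by omega)]
    simp [pw, hca]
  have hsplit : c + Sb.succDebt = c' + Sb.debt := by
    have hda := Sb.debt_eq_zero_of_le (show 2 * v + 1 ≤ 2 * v + 2 by omega)
    ext1 j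
    simp only [c', succDebt, update_apply, Pi.add_apply]
    split_ifs <;> simp_all
  have hclear : update c' (2 * v + 1) 0 = c := by
    rw [update_idem, ← hca, update_eq_self]
  have hB : weight n c + k / 2 + 3 / 2 = weight n c' + k / 2 + 1 := by
    rw [hw']
    ring
  rw [hsplit, hB, ← hclear]
  exact (Sb.cleanup c' hc' (hcv.right.update (by omega) _)).trans
    (Sa.discharge c' hc' (hcv.left.update le_rfl _) (update_self _ _ _))

theorem reach_cover_children (Sa : Strategy n k (2 * v + 1)) (Sb : Strategy n k (2 * v + 2))
    (hb : 2 * v + 2 < n) {c : Cfg} (hc : IsHalfCfg n c) (hcv : VanishesBelow v c) :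
    Reach n (weight n c + k / 2 + 3 / 2) c
      (update (update (update c (2 * v + 1) (1 / 2, 0) + Sb.debt) (2 * v + 2) (1, 0))
        (2 * v + 1) (1 / 2, 1 / 2)) := by
  have ha : 2 * v + 1 < n := by omega
  have hca : c (2 * v + 1) = 0 := hcv _ (.single (child_two_iff.2 (.inl rfl)))
  have hcb : c (2 * v + 2) = 0 := hcv _ (.single (child_two_iff.2 (.inr rfl)))
  set u₁ := update c (2 * v + 1) (1 / 2, 0)
  set u₂ := update (u₁ + Sb.debt) (2 * v + 2) (1, 0)
  have hu₁ : IsHalfCfg n u₁ := hc.update ha halfVal_half halfVal_zero (by norm_num)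
  have hu₁b : u₁ (2 * v + 2) = 0 := by simp [u₁, hcb]
  have hw₁ : weight n u₁ = weight n c + 1 / 2 := by
    rw [weight_update n c ha]
    simp [pw, hca]
  have hreach₁ : Reach n (weight n c + k / 2 + 3 / 2) c u₁ :=
    (Sa.reach_halfBlack ha hc hca hcv.left).mono (by linarith)
  have hreach₂ : Reach n (weight n c + k / 2 + 3 / 2) u₁ u₂ :=
    (Sb.build u₁ hu₁ hu₁b (hcv.right.update (by omega) _)).mono (by linarith)
  have hu₂a : u₂ (2 * v + 1) = (1 / 2, 0) := by
    simp [u₂, u₁, Sb.debt_eq_zero_of_le (show 2 * v + 1 ≤ 2 * v + 2 by omega)]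
  have hw₂ : weight n u₂ = weight n c + 3 / 2 + weight n Sb.debt := by
    rw [weight_update n _ hb, weight_add, hw₁, pw_add]
    simp [pw, hu₁b, Sb.debt_eq_zero_of_le le_rfl]
    ring
  have hw₃ : weight n (update u₂ (2 * v + 1) (1 / 2, 1 / 2)) = weight n u₂ + 1 / 2 := by
    rw [weight_update n _ ha]
    simp [pw, hu₂a]
  have hreach₃ :
      Reach n (weight n c + k / 2 + 3 / 2) u₂ (update u₂ (2 * v + 1) (1 / 2, 1 / 2)) :=
    Reach.of_moveH (moveH_update_of_pw_eq_one (by simp [hu₂a]) (by simp [hu₂a]) (by norm_num))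
      ((hreach₂.isHalfCfg hu₁).update ha halfVal_half halfVal_half (by norm_num))
      (by linarith [Sb.weight_debt_le])
  exact hreach₁.trans (hreach₂.trans hreach₃)

theorem reach_update_add_succDebt (Sa : Strategy n k (2 * v + 1))
    (Sb : Strategy n k (2 * v + 2)) (hv : v < n) (hb : 2 * v + 2 < n) {c : Cfg}
    (hc : IsHalfCfg n c) (hcv : VanishesBelow v c) {p : ℝ × ℝ} (hp₁ : HalfVal p.1)
    (hp₂ : p.2 = 0) (hle : (c v).1 ≤ p.1) :
    Reach n (weight n c + k / 2 + 3 / 2) c (update (c + Sb.succDebt) v p) := by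
  have hca : c (2 * v + 1) = 0 := hcv _ (.single (child_two_iff.2 (.inl rfl)))
  have hcb : c (2 * v + 2) = 0 := hcv _ (.single (child_two_iff.2 (.inr rfl)))
  have hcover := Sa.reach_cover_children Sb hb hc hcv
  set u := update (update (update c (2 * v + 1) (1 / 2, 0) + Sb.debt) (2 * v + 2) (1, 0))
    (2 * v + 1) (1 / 2, 1 / 2)
  have hw : weight n (update (c + Sb.succDebt) v p) ≤ weight n c + k / 2 + 3 / 2 := by
    have hpw : pw Sb.succDebt v = 0 := by simp [pw, Sb.succDebt_self]
    rw [weight_update n _ hv, weight_add, Sb.weight_succDebt (by omega), pw_add, hpw, hp₂]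
    linarith [hc.pw_nonneg v, hp₁.le_one, Sb.weight_debt_le]
  have huv : u v = c v := by
    simp [u, Sb.debt_eq_zero_of_le (show v ≤ 2 * v + 2 by omega),
      update_of_ne (show v ≠ 2 * v + 1 by omega), update_of_ne (show v ≠ 2 * v + 2 by omega)]
  have hu := hcover.isHalfCfg hc
  rw [← Sb.slide_eq_update_add_succDebt hca hcb p] at hw ⊢
  refine hcover.trans (Reach.of_moveH (moveH_slide hu hv ?_ ?_ (huv ▸ hle) hp₂)
    (hu.slide hv hb hp₁ hp₂) hw)
  · simp [pw, u]
    norm_num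
  · simp [pw, u]

end Strategy

noncomputable def Strategy.succ {n k v : ℕ} (Sa : Strategy n k (2 * v + 1))
    (Sb : Strategy n k (2 * v + 2)) (hv : v < n) (hb : 2 * v + 2 < n) :
    Strategy n (k + 1) v where
  debt := Sb.succDebt
  isHalfCfg_debt := Sb.isHalfCfg_debt.update (by omega) halfVal_zero halfVal_half (by norm_num)
  debt_eq_zero j hj := by
    rw [succDebt, update_of_ne (by rintro rfl; exact hj (.single (child_two_iff.2 (.inl rfl))))]
    exact Sb.debt_eq_zero j fun h => hj (.head (child_two_iff.2 (.inr rfl)) h)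
  weight_debt_le := by
    rw [Sb.weight_succDebt (by omega)]
    push_cast
    linarith [Sb.weight_debt_le]
  build c hc hcv hcb :=
    (Sa.reach_update_add_succDebt Sb hv hb hc hcb halfVal_one rfl (by simp [hcv])).mono
      (by push_cast; linarith)
  cleanup c hc hcb := (Sa.reach_add_succDebt Sb hb hc hcb).mono (by push_cast; linarith)
  discharge c hc hcb hcv := by
    have hw : weight n (update c v 0) = weight n c - 1 / 2 := by
      rw [weight_update n c hv]
      simp [pw, hcv]
    have hslide := Sa.reach_update_add_succDebt Sb hv hb hc hcb (p := 0) halfVal_zero rfl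
      (by simp [hcv])
    have hclean := Sa.reach_add_succDebt Sb hb
      (hc.update hv halfVal_zero halfVal_zero (by norm_num)) (hcb.update le_rfl 0)
    rw [update_add_of_eq_zero Sb.succDebt_self] at hslide
    rw [hw] at hclean
    exact Reach.mono (hslide.trans (hclean.mono (by linarith))) (by push_cast; linarith)

theorem nonempty_strategy {h n : ℕ} (hn : n + 1 = 2 ^ h) {k : ℕ} (hk : 2 ≤ k) :
    ∀ {d v : ℕ}, d + k = h → AtDepth d v → Nonempty (Strategy n k v) := by
  induction k, hk using Nat.le_induction with
  | base =>
    intro d v hd hv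
    have hn' : n + 1 = 2 ^ (d + 1 + 1) := by rw [hn, ← hd]
    exact ⟨.ofLeaves (hv.lt hn (by omega)) (hv.left_child.isLeaf hn')
      (hv.right_child.isLeaf hn')⟩
  | succ k hk ih =>
    intro d v hd hv
    obtain ⟨Sa⟩ := ih (by omega) hv.left_child
    obtain ⟨Sb⟩ := ih (by omega) hv.right_child
    exact ⟨.succ Sa Sb (hv.lt hn (by omega)) (hv.right_child.lt hn (by omega))⟩

/-- there is a half root-pebbling of the binary tree of height h ≥ 2
whose total weight never exceeds h/2 + 1. -/
theorem half_upper_binary (h : ℕ) (hh : 2 ≤ h) :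
    ∃ T c, HPebbling 2 (treeSize 2 h) T c ∧ EmptyCfg (c 0) ∧ EmptyCfg (c T) ∧
      (∃ t, t ≤ T ∧ pw (c t) 0 = 1) ∧
      ∀ t, t ≤ T → weight (treeSize 2 h) (c t) ≤ (h : ℝ) / 2 + 1 := by
  set n := treeSize 2 h
  have hn : n + 1 = 2 ^ h := treeSize_two_add_one h
  have hroot : AtDepth 0 0 := ⟨le_rfl, by norm_num⟩
  obtain ⟨S⟩ := nonempty_strategy hn hh (zero_add h) hroot
  obtain ⟨hbuild, hclear⟩ := S.reach_through_pebbled (hroot.lt hn (by omega)) (isHalfCfg_zero n)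
    rfl (fun _ _ => rfl) (p := 0) halfVal_zero rfl
  obtain ⟨T, s, hs₀, hsT, ⟨t, ht, hst⟩, hs⟩ := hbuild.exists_seq_through hclear
  rw [show update (0 : Cfg) 0 0 = 0 from update_eq_self_iff.2 rfl] at hsT
  simp only [weight_zero, Prod.fst_zero, zero_add] at hs hst
  have hgood : ∀ t ≤ T, IsHalfCfg n (s t) ∧ weight n (s t) ≤ h / 2 + 1 := by
    rintro (_ | t) ht
    · rw [hs₀]
      exact ⟨isHalfCfg_zero n, by rw [weight_zero]; positivity⟩
    · exact (hs t (by omega)).2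
  refine ⟨T, s, ⟨fun t ht => (hgood t ht).1, fun t ht => (hs t ht).1⟩, ?_, ?_,
    ⟨t, ht, ?_⟩, fun t ht => (hgood t ht).2⟩
  · exact fun i => by rw [hs₀]; rfl
  · exact fun i => by rw [hsT]; rfl
  · simp [hst, pw]
end

section
/- In the fractional pebbling game on the balanced d-ary tree of height 3 (d ≥ 2), let π be a sub-root sub-pebbling with initial black subtree weight at most 1−ε, where ε ∈ (−1/2, 1/2], and let t* be a time at which all d children of the root have pebble weight 1. If the total pebble weight in the principal subtrees is at most (3/2)(d−1)+1−ε for all t ≤ t*, then there is a time t_b > t* at which the subtree pebble weight is at least (3/2)(d−1)+1+ε, and moreover the white subtree weight is at least 1/2+ε for all t in [t*, t_b]. -/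
/-
Let W(t) be the white weight on the children of the root. At t*, W ≥ (d-1)/2 + ε. Indeed, if the
black weight of some child j of the root was last raised at t₁ < t*, then j's children were full
at t₁, so the bound at t₁ leaves at most (d-1)/2 - ε for the other children of the root; their
black weight has not grown since, so they reach weight 1 at t* mostly through white weight.
Otherwise the black weight on the children of the root never grew and is at most 1 - ε.

Since W vanishes at the end, it first decreases at some step t_b ≥ t*. Removing white weight from a
child of the root requires its children to be full, so the subtree then holds at least
d + W(t_b) ≥ d + W(t*) ≥ (3/2)(d-1) + 1 + ε, and W ≥ W(t*) ≥ 1/2 + ε on [t*, t_b]. Moreover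
t_b ≠ t*, since at t* the children of the root are full too, and 2d exceeds the bound at t*.
-/

open Finset

lemma rel_of_forall_rel_succ_Ico {β : Type*} (r : β → β → Prop) [Std.Refl r] [IsTrans β r]
    {f : ℕ → β} {a b : ℕ} (h : ∀ n, a ≤ n → n < b → r (f n) (f (n + 1))) (hab : a ≤ b) :
    r (f a) (f b) := by
  induction b, hab using Nat.le_induction with
  | base => exact refl _
  | succ m ham ih =>
    exact _root_.trans (ih fun n han hnm => h n han (by omega)) (h m ham (by omega))

lemma exists_first_decrease {α : Type*} [LinearOrder α] {f : ℕ → α} {a b : ℕ} (hab : a ≤ b)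
    (h : f b < f a) :
    ∃ t, a ≤ t ∧ t < b ∧ f (t + 1) < f t ∧ ∀ s, a ≤ s → s ≤ t → f a ≤ f s := by
  classical
  have hex : ∃ t, a ≤ t ∧ t < b ∧ f (t + 1) < f t := by
    by_contra! hno
    exact h.not_ge (rel_of_forall_rel_succ_Ico (· ≤ ·) hno hab)
  obtain ⟨hat, htb, hdec⟩ := Nat.find_spec hex
  refine ⟨Nat.find hex, hat, htb, hdec, fun s has hsf =>
    rel_of_forall_rel_succ_Ico (· ≤ ·) (fun n han hns => ?_) has⟩
  exact not_lt.1 fun hlt => Nat.find_min hex (by omega) ⟨han, by omega, hlt⟩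

lemma exists_last_of_exists {P : ℕ → Prop} {N : ℕ} (h : ∃ t < N, P t) :
    ∃ t < N, P t ∧ ∀ s, t < s → s < N → ¬ P s := by
  classical
  obtain ⟨t, htN, hP⟩ := h
  obtain ⟨hlt, hlast⟩ := Nat.findGreatest_spec (P := fun t => t < N ∧ P t) htN.le ⟨htN, hP⟩
  exact ⟨_, hlt, hlast, fun s hs hsN hPs =>
    Nat.findGreatest_is_greatest (P := fun t => t < N ∧ P t) hs hsN.le ⟨hsN, hPs⟩⟩

namespace Valid

variable {n : ℕ} {c : Cfg}

lemma black_nonneg (hv : Valid n c) (i : ℕ) : 0 ≤ (c i).1 := (hv.1 i).1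

lemma white_nonneg (hv : Valid n c) (i : ℕ) : 0 ≤ (c i).2 := (hv.1 i).2.1

lemma pw_nonneg (hv : Valid n c) (i : ℕ) : 0 ≤ pw c i :=
  add_nonneg (hv.black_nonneg i) (hv.white_nonneg i)

end Valid

namespace Move

variable {d n : ℕ} {c c' : Cfg} {j : ℕ}

lemma covered_of_white_lt (hm : Move d n c c') (h : (c' j).2 < (c j).2) : covered d c j := by
  have hchanged : c' j ≠ c j := fun e => (e ▸ h).false
  rcases hm with ⟨i, -, hw, hrest⟩ | ⟨i, -, hcov, -, -, hch, hrest⟩ | ⟨i, -, hw, hrest⟩ |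
    ⟨i, -, hw, -, hrest⟩
  · obtain rfl | hji := eq_or_ne j i
    exacts [absurd hw h.ne, absurd (hrest j hji) hchanged]
  · obtain rfl | hji := eq_or_ne j i
    · exact hcov
    by_cases hc : child d i j
    exacts [absurd (hch j hc).2 h.ne, absurd (hrest j hji hc) hchanged]
  · obtain rfl | hji := eq_or_ne j i
    exacts [absurd hw h.not_ge, absurd (hrest j hji) hchanged]
  · obtain rfl | hji := eq_or_ne j i
    exacts [absurd hw h.ne, absurd (hrest j hji) hchanged]

lemma covered_of_black_lt (hm : Move d n c c') (hj : ¬ isLeaf d n j) (h : (c j).1 < (c' j).1) :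
    covered d c j ∧ ∀ k, k ≠ j → ¬ child d j k → c' k = c k := by
  have hchanged : c' j ≠ c j := fun e => (e ▸ h).false
  rcases hm with ⟨i, hb, -, hrest⟩ | ⟨i, -, hcov, -, -, hch, hrest⟩ | ⟨i, hb, -, hrest⟩ |
    ⟨i, hleaf, -, -, hrest⟩
  · obtain rfl | hji := eq_or_ne j i
    exacts [absurd hb h.not_ge, absurd (hrest j hji) hchanged]
  · obtain rfl | hji := eq_or_ne j i
    · exact ⟨hcov, hrest⟩
    by_cases hc : child d i j
    exacts [absurd (hch j hc).1 h.not_ge, absurd (hrest j hji hc) hchanged]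
  · obtain rfl | hji := eq_or_ne j i
    exacts [absurd hb h.ne', absurd (hrest j hji) hchanged]
  · obtain rfl | hji := eq_or_ne j i
    exacts [absurd hleaf hj, absurd (hrest j hji) hchanged]

end Move

def children (d i : ℕ) : Finset ℕ := Ico (d * i + 1) (d * i + 1 + d)

section Children

variable {d i j : ℕ}

lemma mem_children : j ∈ children d i ↔ child d i j := by
  simp only [children, mem_Ico, child]
  constructor
  · rintro ⟨hlo, hhi⟩
    exact ⟨j - (d * i + 1), by omega, by omega⟩
  · rintro ⟨k, hk, rfl⟩
    omega

lemma card_children : (children d i).card = d := by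
  simp [children]

lemma sum_pw_children_of_covered {c : Cfg} (h : covered d c i) :
    ∑ j ∈ children d i, pw c j = d := by
  rw [sum_congr rfl fun j hj => h j (mem_children.1 hj)]
  simp [card_children]

end Children

lemma treeSize_three (d : ℕ) : treeSize d 3 = d * d + d + 1 := by
  simp [treeSize, sum_range_succ]
  ring

section HeightThree

variable {d j : ℕ}

lemma bounds_of_mem_children_zero (hj : j ∈ children d 0) :
    1 ≤ j ∧ j ≤ d ∧ d * j ≤ d * d := by
  simp only [children, mem_Ico] at hj
  exact ⟨by omega, by omega, Nat.mul_le_mul_left d (by omega)⟩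

lemma children_zero_subset : children d 0 ⊆ Ico 1 (treeSize d 3) := by
  intro k hk
  simp only [children, mem_Ico, treeSize_three] at hk ⊢
  omega

lemma children_subset_of_mem_children_zero (hj : j ∈ children d 0) :
    children d j ⊆ Ico 1 (treeSize d 3) := by
  have := bounds_of_mem_children_zero hj
  intro k hk
  simp only [children, mem_Ico, treeSize_three] at hk ⊢
  omega

lemma disjoint_children_of_mem_children_zero (hj : j ∈ children d 0) :
    Disjoint (children d j) (children d 0) := by
  have := bounds_of_mem_children_zero hj
  have : d ≤ d * j := Nat.le_mul_of_pos_right d this.1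
  refine disjoint_left.2 fun k hkj hk0 => ?_
  simp only [children, mem_Ico] at hkj hk0
  omega

lemma not_isLeaf_of_mem_children_zero (hj : j ∈ children d 0) : ¬ isLeaf d (treeSize d 3) j := by
  have := bounds_of_mem_children_zero hj
  rw [isLeaf, treeSize_three]
  omega

lemma add_sum_pw_le_of_covered {c : Cfg} {S : Finset ℕ} (hv : Valid (treeSize d 3) c)
    (hj : j ∈ children d 0) (hcov : covered d c j) (hS : S ⊆ children d 0) :
    d + ∑ k ∈ S, pw c k ≤ ∑ i ∈ Ico 1 (treeSize d 3), pw c i := by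
  rw [← sum_pw_children_of_covered hcov,
    ← sum_union ((disjoint_children_of_mem_children_zero hj).mono_right hS)]
  exact sum_le_sum_of_subset_of_nonneg
    (union_subset (children_subset_of_mem_children_zero hj) (hS.trans children_zero_subset))
    fun i _ _ => hv.pw_nonneg i

end HeightThree

lemma one_sub_black_le_white_of_antitone {c : ℕ → Cfg} {s tstar k : ℕ}
    (hfull : pw (c tstar) k = 1) (hs : s ≤ tstar)
    (hanti : ∀ t, s ≤ t → t < tstar → (c (t + 1) k).1 ≤ (c t k).1) :
    1 - (c s k).1 ≤ (c tstar k).2 := by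
  have := rel_of_forall_rel_succ_Ico (f := fun t => (c t k).1) (· ≥ ·) hanti hs
  unfold pw at hfull
  linarith

section Pebbling

variable {d T tstar : ℕ} {c : ℕ → Cfg} {ε : ℝ}

lemma white_children_ge_of_last_black_increase {t1 j : ℕ}
    (hp : Pebbling d (treeSize d 3) T c) (htT : tstar ≤ T) (ht1 : t1 < tstar)
    (hcov : covered d (c tstar) 0) (hj : j ∈ children d 0)
    (hinc : (c t1 j).1 < (c (t1 + 1) j).1)
    (hlast : ∀ t, t1 + 1 ≤ t → t < tstar → ∀ k ∈ children d 0, (c (t + 1) k).1 ≤ (c t k).1)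
    (hbound : ∑ i ∈ Ico 1 (treeSize d 3), pw (c t1) i ≤ 3 / 2 * ((d : ℝ) - 1) + 1 - ε) :
    ((d : ℝ) - 1) / 2 + ε ≤ ∑ k ∈ children d 0, (c tstar k).2 := by
  classical
  obtain ⟨hcovj, hfix⟩ :=
    (hp.2 t1 (by omega)).covered_of_black_lt (not_isLeaf_of_mem_children_zero hj) hinc
  set R := (children d 0).erase j
  have hR : ∀ k ∈ R, 1 - pw (c t1) k ≤ (c tstar k).2 := by
    intro k hk
    obtain ⟨hkj, hk0⟩ := mem_erase.1 hk
    have hkfix : c (t1 + 1) k = c t1 k := hfix k hkj fun hch =>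
      disjoint_left.1 (disjoint_children_of_mem_children_zero hj) (mem_children.2 hch) hk0
    have hwhite := one_sub_black_le_white_of_antitone (hcov k (mem_children.1 hk0)) ht1
      fun t h1 h2 => hlast t h1 h2 k hk0
    have := (hp.1 t1 (by omega)).white_nonneg k
    rw [hkfix] at hwhite
    unfold pw
    linarith
  have hcardR : (R.card : ℝ) = d - 1 := by
    obtain ⟨hj1, hjd, -⟩ := bounds_of_mem_children_zero hj
    rw [card_erase_of_mem hj, card_children, Nat.cast_sub (by omega), Nat.cast_one]
  have hrest := add_sum_pw_le_of_covered (hp.1 t1 (by omega)) hj hcovj (erase_subset j _)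
  calc ((d : ℝ) - 1) / 2 + ε ≤ ∑ k ∈ R, (1 - pw (c t1) k) := by
        rw [sum_sub_distrib, sum_const, nsmul_one, hcardR]
        linarith
    _ ≤ ∑ k ∈ R, (c tstar k).2 := sum_le_sum hR
    _ ≤ ∑ k ∈ children d 0, (c tstar k).2 :=
        sum_le_sum_of_subset_of_nonneg (erase_subset _ _)
          fun i _ _ => (hp.1 tstar htT).white_nonneg i

lemma white_children_ge_of_covered (hd : 1 ≤ d) (hp : Pebbling d (treeSize d 3) T c)
    (htT : tstar ≤ T) (hcov : covered d (c tstar) 0)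
    (hinit : ∑ i ∈ Ico 1 (treeSize d 3), (c 0 i).1 ≤ 1 - ε)
    (hbound : ∀ t, t ≤ tstar →
      ∑ i ∈ Ico 1 (treeSize d 3), pw (c t) i ≤ 3 / 2 * ((d : ℝ) - 1) + 1 - ε) :
    ((d : ℝ) - 1) / 2 + ε ≤ ∑ k ∈ children d 0, (c tstar k).2 := by
  by_cases hinc : ∃ t < tstar, ∃ k ∈ children d 0, (c t k).1 < (c (t + 1) k).1
  · obtain ⟨t1, ht1, ⟨j, hj, hjinc⟩, hlast⟩ := exists_last_of_exists hinc
    exact white_children_ge_of_last_black_increase hp htT ht1 hcov hj hjinc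
      (fun t h1 h2 k hk => not_lt.1 fun h => hlast t h1 h2 ⟨k, hk, h⟩) (hbound t1 ht1.le)
  · push Not at hinc
    have hwhite : ∀ k ∈ children d 0, 1 - (c 0 k).1 ≤ (c tstar k).2 := fun k hk =>
      one_sub_black_le_white_of_antitone (hcov k (mem_children.1 hk)) (Nat.zero_le _)
        fun t _ ht => hinc t ht k hk
    have hblack : ∑ k ∈ children d 0, (c 0 k).1 ≤ ∑ i ∈ Ico 1 (treeSize d 3), (c 0 i).1 :=
      sum_le_sum_of_subset_of_nonneg children_zero_subset
        fun i _ _ => (hp.1 0 (Nat.zero_le _)).black_nonneg i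
    have hsum := sum_le_sum hwhite
    rw [sum_sub_distrib, sum_const, card_children, nsmul_one] at hsum
    have : (1 : ℝ) ≤ d := by exact_mod_cast hd
    linarith

end Pebbling

theorem frac_IH_base_general (d : ℕ) (hd : 2 ≤ d) (ε : ℝ) (hε1 : -(1 / 2) < ε)
    (T : ℕ) (c : ℕ → Cfg) (tstar : ℕ)
    (hp : Pebbling d (treeSize d 3) T c)
    (ht : tstar ≤ T)
    (hcov : ∀ j, child d 0 j → pw (c tstar) j = 1)
    (hinit : (∑ i ∈ Finset.Ico 1 (treeSize d 3), ((c 0) i).1) ≤ 1 - ε)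
    (hend : ∀ i, ((c T) i).2 = 0)
    (hbound : ∀ t, t ≤ tstar →
      (∑ i ∈ Finset.Ico 1 (treeSize d 3), pw (c t) i) ≤ 3 / 2 * ((d : ℝ) - 1) + 1 - ε) :
    ∃ tb, tstar < tb ∧ tb ≤ T ∧
      3 / 2 * ((d : ℝ) - 1) + 1 + ε ≤ ∑ i ∈ Finset.Ico 1 (treeSize d 3), pw (c tb) i ∧
      ∀ t, tstar ≤ t → t ≤ tb →
        1 / 2 + ε ≤ ∑ i ∈ Finset.Ico 1 (treeSize d 3), ((c t) i).2 := by
  have hd' : (2 : ℝ) ≤ d := by exact_mod_cast hd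
  set W : ℕ → ℝ := fun t => ∑ k ∈ children d 0, (c t k).2
  have hWstar : ((d : ℝ) - 1) / 2 + ε ≤ W tstar :=
    white_children_ge_of_covered (by omega) hp ht hcov hinit hbound
  have hWT : W T = 0 := sum_eq_zero fun k _ => hend k
  obtain ⟨tb, htb, htbT, hdrop, hWmono⟩ := exists_first_decrease (f := W) ht (by linarith)
  obtain ⟨j, hj, hjdrop⟩ := exists_lt_of_sum_lt hdrop
  have hsw := add_sum_pw_le_of_covered (hp.1 tb htbT.le) hj
    ((hp.2 tb htbT).covered_of_white_lt hjdrop) subset_rfl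
  have hWpw : W tb ≤ ∑ k ∈ children d 0, pw (c tb) k :=
    sum_le_sum fun k _ => le_add_of_nonneg_left ((hp.1 tb htbT.le).black_nonneg k)
  refine ⟨tb, htb.lt_of_ne ?_, htbT.le, by linarith [hWmono tb htb le_rfl], fun t h1 h2 => ?_⟩
  · rintro rfl
    rw [sum_pw_children_of_covered hcov] at hsw
    linarith [hbound tstar le_rfl]
  · have : W t ≤ ∑ i ∈ Ico 1 (treeSize d 3), (c t i).2 :=
      sum_le_sum_of_subset_of_nonneg children_zero_subset
        fun i _ _ => (hp.1 t (by omega)).white_nonneg i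
    linarith [hWmono t h1 h2]

/-- base case of the induction hypothesis for the fractional lower
bound, on the d-ary tree of height 3 (min_3 = (3/2)(d-1)+1). -/
theorem frac_IH_base (d : ℕ) (hd : 2 ≤ d) (ε : ℝ) (hε1 : -(1 / 2) < ε) (hε2 : ε ≤ 1 / 2)
    (T : ℕ) (c : ℕ → Cfg) (tstar : ℕ)
    (hp : Pebbling d (treeSize d 3) T c)
    (ht : tstar ≤ T)
    (hcov : ∀ j, child d 0 j → pw (c tstar) j = 1)
    (hinit : (∑ i ∈ Finset.Ico 1 (treeSize d 3), ((c 0) i).1) ≤ 1 - ε)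
    (hend : ∀ i, ((c T) i).2 = 0)
    (hbound : ∀ t, t ≤ tstar →
      (∑ i ∈ Finset.Ico 1 (treeSize d 3), pw (c t) i) ≤ 3 / 2 * ((d : ℝ) - 1) + 1 - ε) :
    ∃ tb, tstar < tb ∧ tb ≤ T ∧
      3 / 2 * ((d : ℝ) - 1) + 1 + ε ≤ ∑ i ∈ Finset.Ico 1 (treeSize d 3), pw (c tb) i ∧
      ∀ t, tstar ≤ t → t ≤ tb →
        1 / 2 + ε ≤ ∑ i ∈ Finset.Ico 1 (treeSize d 3), ((c t) i).2 :=
  frac_IH_base_general d hd ε hε1 T c tstar hp ht hcov hinit hend hbound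
end

section
/- Any fractional pebbling of a DAG that uses black sliding moves and has maximum weight P at any time can be converted into a fractional pebbling without black sliding moves, achieving the same final configuration and reaching the same root-pebbling goal, whose maximum weight at any time is at most P + 1. -/
/-- Every child of i (w.r.t. the child relation chl) has pebble weight 1. -/
def coveredD (chl : ℕ → ℕ → Prop) (c : Cfg) (i : ℕ) : Prop := ∀ j, chl i j → pw c j = 1

/-- A leaf is a node with no children. -/
def isLeafD (chl : ℕ → ℕ → Prop) (i : ℕ) : Prop := ∀ j, ¬ chl i j

/-- Fractional pebbling moves on a DAG, with black sliding moves allowed. -/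
def MoveD (n : ℕ) (chl : ℕ → ℕ → Prop) (c c' : Cfg) : Prop :=
  (∃ i, (c' i).1 ≤ (c i).1 ∧ (c' i).2 = (c i).2 ∧ ∀ j, j ≠ i → c' j = c j) ∨
  (∃ i, i < n ∧ coveredD chl c i ∧ (c i).1 ≤ (c' i).1 ∧ (c' i).2 = 0 ∧
    (∀ j, chl i j → (c' j).1 ≤ (c j).1 ∧ (c' j).2 = (c j).2) ∧
    (∀ j, j ≠ i → ¬ chl i j → c' j = c j)) ∨
  (∃ i, (c' i).1 = (c i).1 ∧ (c i).2 ≤ (c' i).2 ∧ ∀ j, j ≠ i → c' j = c j) ∨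
  (∃ i, i < n ∧ isLeafD chl i ∧ (c' i).2 = (c i).2 ∧ (c i).1 ≤ (c' i).1 ∧
    ∀ j, j ≠ i → c' j = c j)

/-- Fractional pebbling moves on a DAG without black sliding moves: placing black
weight on a covered node leaves all other nodes unchanged. -/
def MoveDNS (n : ℕ) (chl : ℕ → ℕ → Prop) (c c' : Cfg) : Prop :=
  (∃ i, (c' i).1 ≤ (c i).1 ∧ (c' i).2 = (c i).2 ∧ ∀ j, j ≠ i → c' j = c j) ∨
  (∃ i, i < n ∧ coveredD chl c i ∧ (c i).1 ≤ (c' i).1 ∧ (c' i).2 = 0 ∧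
    (∀ j, j ≠ i → c' j = c j)) ∨
  (∃ i, (c' i).1 = (c i).1 ∧ (c i).2 ≤ (c' i).2 ∧ ∀ j, j ≠ i → c' j = c j) ∨
  (∃ i, i < n ∧ isLeafD chl i ∧ (c' i).2 = (c i).2 ∧ (c i).1 ≤ (c' i).1 ∧
    ∀ j, j ≠ i → c' j = c j)

/-!
A black sliding move at `i` is simulated by first placing the new black weight on `i`
(a plain placement, since the children of `i` are still fully pebbled) and then lowering
the black weight of the children of `i` one at a time. Every intermediate configuration
agrees with the source of the move except at `i` and at children, whose weight only drops;
node `i` carries weight at most `1`, so the total weight exceeds that of the source by at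
most `1`.
-/

open Relation

section Walks

variable {α : Type*} {S : α → α → Prop}

def IsWalk (S : α → α → Prop) (L : ℕ) (d : ℕ → α) : Prop :=
  ∀ t < L, S (d t) (d (t + 1))

theorem IsWalk.exists_extend {L : ℕ} {d : ℕ → α} {b : α} (hd : IsWalk S L d)
    (h : ReflTransGen S (d L) b) :
    ∃ L' d', L ≤ L' ∧ IsWalk S L' d' ∧ (∀ t ≤ L, d' t = d t) ∧ d' L' = b := by
  induction h with
  | refl => exact ⟨L, d, le_rfl, hd, fun _ _ => rfl, rfl⟩
  | @tail _ y _ hxy ih =>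
    obtain ⟨L', d', hLL', hd', hagree, hend⟩ := ih
    refine ⟨L' + 1, fun t => if t ≤ L' then d' t else y, by omega, fun t ht => ?_,
      fun t ht => by simp [(by omega : t ≤ L'), hagree t ht], by simp⟩
    rcases (by omega : t + 1 ≤ L' ∨ t = L') with h | rfl
    · simpa [h, (by omega : t ≤ L')] using hd' t (by omega)
    · simpa [hend] using hxy

theorem exists_walk_visiting {T : ℕ} {c : ℕ → α}
    (hc : ∀ t < T, ReflTransGen S (c t) (c (t + 1))) :
    ∃ L d, IsWalk S L d ∧ d 0 = c 0 ∧ d L = c T ∧ ∀ t ≤ T, ∃ k ≤ L, d k = c t := by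
  induction T with
  | zero =>
    exact ⟨0, fun _ => c 0, fun _ h => absurd h (Nat.not_lt_zero _), rfl, rfl,
      fun t ht => ⟨0, le_rfl, by rw [Nat.le_zero.1 ht]⟩⟩
  | succ T ih =>
    obtain ⟨L, d, hd, h0, hL, hvisit⟩ := ih fun t ht => hc t (by omega)
    obtain ⟨L', d', hLL', hd', hagree, hend⟩ := hd.exists_extend (hL ▸ hc T (by omega))
    refine ⟨L', d', hd', (hagree 0 (Nat.zero_le _)).trans h0, hend, fun t ht => ?_⟩
    rcases (by omega : t ≤ T ∨ t = T + 1) with ht | rfl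
    · obtain ⟨k, hk, hdk⟩ := hvisit t ht
      exact ⟨k, hk.trans hLL', (hagree k hk).trans hdk⟩
    · exact ⟨L', le_rfl, hend⟩

end Walks

section Pebbling

variable {n : ℕ} {chl : ℕ → ℕ → Prop} {a b c : Cfg} {i : ℕ}

theorem Valid.pw_nonneg_s11 (ha : Valid n a) (j : ℕ) : 0 ≤ pw a j :=
  add_nonneg (ha.1 j).1 (ha.1 j).2.1

theorem Valid.lt_of_pw_eq_one {j : ℕ} (ha : Valid n a) (hj : pw a j = 1) : j < n := by
  by_contra h
  simp [pw, ha.2 j (not_lt.1 h)] at hj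

theorem Valid.of_forall_eq_or_eq (ha : Valid n a) (hb : Valid n b)
    (h : ∀ j, c j = a j ∨ c j = b j) : Valid n c := by
  refine ⟨fun j => ?_, fun j hj => ?_⟩
  · rcases h j with e | e
    · simpa [pw, e] using ha.1 j
    · simpa [pw, e] using hb.1 j
  · rcases h j with e | e
    · rw [e, ha.2 j hj]
    · rw [e, hb.2 j hj]

theorem weight_le_add_one (hne : ∀ j ≠ i, pw c j ≤ pw a j) (hi : pw c i ≤ pw a i + 1) :
    weight n c ≤ weight n a + 1 := by
  calc weight n c ≤ ∑ j ∈ Finset.range n, (pw a j + if j = i then 1 else 0) :=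
        Finset.sum_le_sum fun j _ => by
          split_ifs with h
          · exact h ▸ hi
          · simpa using hne j h
    _ ≤ weight n a + 1 := by
        rw [Finset.sum_add_distrib, Finset.sum_ite_eq']
        split_ifs <;> simp [weight]

def BoundedMoveDNS (n : ℕ) (chl : ℕ → ℕ → Prop) (Q : ℝ) (a b : Cfg) : Prop :=
  MoveDNS n chl a b ∧ Valid n b ∧ weight n b ≤ Q

/-- Simulating a sliding move at `i` from `a` to `b`: the configuration once the children
of `i` below `s` have been lowered. -/
noncomputable def slideStage (chl : ℕ → ℕ → Prop) (i : ℕ) (a b : Cfg) (s : ℕ) : Cfg :=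
  open Classical in fun j => if j = i ∨ (chl i j ∧ j < s) then b j else a j

theorem moveDNS_slideStage_zero (hi : i < n) (hcov : coveredD chl a i)
    (hb₁ : (a i).1 ≤ (b i).1) (hb₂ : (b i).2 = 0) :
    MoveDNS n chl a (slideStage chl i a b 0) :=
  Or.inr <| Or.inl ⟨i, hi, hcov, by simpa [slideStage] using hb₁, by simpa [slideStage] using hb₂,
    fun j hj => by simp [slideStage, hj]⟩

theorem slideStage_succ_eq_or_moveDNS (s : ℕ)
    (hch : ∀ j, chl i j → (b j).1 ≤ (a j).1 ∧ (b j).2 = (a j).2) :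
    slideStage chl i a b (s + 1) = slideStage chl i a b s ∨
      MoveDNS n chl (slideStage chl i a b s) (slideStage chl i a b (s + 1)) := by
  have hother : ∀ j ≠ s, slideStage chl i a b (s + 1) j = slideStage chl i a b s j := by
    intro j hj
    classical
    simp only [slideStage, Nat.lt_succ_iff_lt_or_eq, hj, or_false]
  by_cases hs : chl i s ∧ s ≠ i
  · have h₀ : slideStage chl i a b s s = a s := by simp [slideStage, hs.2]
    have h₁ : slideStage chl i a b (s + 1) s = b s := by simp [slideStage, hs.1]
    exact Or.inr <| Or.inl ⟨s, by simpa [h₀, h₁] using (hch s hs.1).1,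
      by simpa [h₀, h₁] using (hch s hs.1).2, hother⟩
  · refine Or.inl <| funext fun j => ?_
    by_cases hj : j = s
    · subst hj
      by_cases hji : j = i <;> simp_all [slideStage]
    · exact hother j hj

theorem slideStage_eq_right {s : ℕ} (hlt : ∀ j, chl i j → j < s)
    (hoth : ∀ j, j ≠ i → ¬ chl i j → b j = a j) : slideStage chl i a b s = b := by
  funext j
  by_cases hji : j = i
  · simp [slideStage, hji]
  · by_cases hc : chl i j
    · simp [slideStage, hc, hlt j hc]
    · simp [slideStage, hji, hc, hoth j hji hc]

theorem Valid.slideStage (ha : Valid n a) (hb : Valid n b) (s : ℕ) :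
    Valid n (slideStage chl i a b s) :=
  ha.of_forall_eq_or_eq hb fun j => by
    unfold _root_.slideStage
    split_ifs <;> simp

theorem weight_slideStage_le (ha : Valid n a) (hb : Valid n b)
    (hch : ∀ j, chl i j → (b j).1 ≤ (a j).1 ∧ (b j).2 = (a j).2) (s : ℕ) :
    weight n (slideStage chl i a b s) ≤ weight n a + 1 := by
  classical
  refine weight_le_add_one (i := i) (fun j hj => ?_) ?_
  · simp only [pw, slideStage, hj, false_or]
    split_ifs with h
    · linarith [hch j h.1]
    · exact le_rfl
  · simpa [pw, slideStage] using
      (hb.1 i).2.2.trans (le_add_of_nonneg_left (ha.pw_nonneg_s11 i))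

theorem reflTransGen_boundedMoveDNS_of_slide {P : ℝ} (ha : Valid n a) (hb : Valid n b)
    (hwa : weight n a ≤ P) (hi : i < n) (hcov : coveredD chl a i)
    (hb₁ : (a i).1 ≤ (b i).1) (hb₂ : (b i).2 = 0)
    (hch : ∀ j, chl i j → (b j).1 ≤ (a j).1 ∧ (b j).2 = (a j).2)
    (hoth : ∀ j, j ≠ i → ¬ chl i j → b j = a j) :
    ReflTransGen (BoundedMoveDNS n chl (P + 1)) a b := by
  have hgood : ∀ s, Valid n (slideStage chl i a b s) ∧
      weight n (slideStage chl i a b s) ≤ P + 1 := fun s =>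
    ⟨ha.slideStage hb s, by linarith [weight_slideStage_le ha hb hch s]⟩
  have hsteps : ∀ s, ReflTransGen (BoundedMoveDNS n chl (P + 1)) a (slideStage chl i a b s) := by
    intro s
    induction s with
    | zero => exact .single ⟨moveDNS_slideStage_zero hi hcov hb₁ hb₂, hgood 0⟩
    | succ s ih =>
      rcases slideStage_succ_eq_or_moveDNS s hch with h | h
      · rwa [h]
      · exact ih.tail ⟨h, hgood (s + 1)⟩
  have hchild_lt : ∀ j, chl i j → j < n := fun j hj => ha.lt_of_pw_eq_one (hcov j hj)
  exact slideStage_eq_right hchild_lt hoth ▸ hsteps n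

theorem reflTransGen_boundedMoveDNS_of_moveD {P : ℝ} (ha : Valid n a) (hb : Valid n b)
    (hm : MoveD n chl a b) (hwa : weight n a ≤ P) (hwb : weight n b ≤ P) :
    ReflTransGen (BoundedMoveDNS n chl (P + 1)) a b := by
  have single : MoveDNS n chl a b → ReflTransGen (BoundedMoveDNS n chl (P + 1)) a b :=
    fun h => .single ⟨h, hb, by linarith⟩
  rcases hm with h | ⟨i, hi, hcov, hb₁, hb₂, hch, hoth⟩ | h | h
  · exact single (Or.inl h)
  · exact reflTransGen_boundedMoveDNS_of_slide ha hb hwa hi hcov hb₁ hb₂ hch hoth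
  · exact single (Or.inr (Or.inr (Or.inl h)))
  · exact single (Or.inr (Or.inr (Or.inr h)))

end Pebbling

theorem remove_sliding_moves_general (n : ℕ) (chl : ℕ → ℕ → Prop) (r : ℕ)
    (T : ℕ) (c : ℕ → Cfg) (P : ℝ)
    (hval : ∀ t, t ≤ T → Valid n (c t))
    (hmove : ∀ t, t < T → MoveD n chl (c t) (c (t + 1)))
    (hP : ∀ t, t ≤ T → weight n (c t) ≤ P) :
    ∃ (T' : ℕ) (c' : ℕ → Cfg), (∀ t, t ≤ T' → Valid n (c' t)) ∧
      (∀ t, t < T' → MoveDNS n chl (c' t) (c' (t + 1))) ∧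
      c' 0 = c 0 ∧ c' T' = c T ∧
      ((∃ t, t ≤ T ∧ pw (c t) r = 1) → ∃ t, t ≤ T' ∧ pw (c' t) r = 1) ∧
      ∀ t, t ≤ T' → weight n (c' t) ≤ P + 1 := by
  obtain ⟨L, d, hd, h0, hL, hvisit⟩ := exists_walk_visiting (S := BoundedMoveDNS n chl (P + 1))
    fun t ht => reflTransGen_boundedMoveDNS_of_moveD (hval t ht.le) (hval (t + 1) ht)
      (hmove t ht) (hP t ht.le) (hP (t + 1) ht)
  have hgood : ∀ t ≤ L, Valid n (d t) ∧ weight n (d t) ≤ P + 1 := by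
    rintro (_ | t) ht
    · rw [h0]
      exact ⟨hval 0 (Nat.zero_le _), by linarith [hP 0 (Nat.zero_le _)]⟩
    · exact (hd t ht).2
  refine ⟨L, d, fun t ht => (hgood t ht).1, fun t ht => (hd t ht).1, h0, hL, ?_,
    fun t ht => (hgood t ht).2⟩
  rintro ⟨t, ht, hr⟩
  obtain ⟨k, hk, hdk⟩ := hvisit t ht
  exact ⟨k, hk, hdk ▸ hr⟩

/-- a fractional pebbling of a DAG using black sliding moves with
maximum weight P can be converted into one without sliding moves, with the same
initial and final configurations and reaching the same root-pebbling goal, whose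
maximum weight is at most P + 1. -/
theorem remove_sliding_moves (n : ℕ) (chl : ℕ → ℕ → Prop) (r : ℕ) (hr : r < n)
    (hacyc : ∀ i, ¬ Relation.TransGen chl i i)
    (T : ℕ) (c : ℕ → Cfg) (P : ℝ)
    (hval : ∀ t, t ≤ T → Valid n (c t))
    (hmove : ∀ t, t < T → MoveD n chl (c t) (c (t + 1)))
    (hP : ∀ t, t ≤ T → weight n (c t) ≤ P) :
    ∃ (T' : ℕ) (c' : ℕ → Cfg), (∀ t, t ≤ T' → Valid n (c' t)) ∧
      (∀ t, t < T' → MoveDNS n chl (c' t) (c' (t + 1))) ∧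
      c' 0 = c 0 ∧ c' T' = c T ∧
      ((∃ t, t ≤ T ∧ pw (c t) r = 1) → ∃ t, t ≤ T' ∧ pw (c' t) r = 1) ∧
      ∀ t, t ≤ T' → weight n (c' t) ≤ P + 1 :=
  remove_sliding_moves_general n chl r T c P hval hmove hP
end

section
/- If π₁ is a fractional sub-pebbling of a tree starting with some initial white and black pebble weight such that the total weight never exceeds P, then there exists a fractional sub-pebbling π₂ with the same initial black pebble weight and zero initial white pebble weight, achieving the same goal, whose total weight also never exceeds P. -/
/-! Place the initial white weight node by node, in index order, by `n` moves that each raise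
one white weight from `0`; every intermediate configuration lies below `c 0` pointwise, so
neither validity nor the bound `P` is lost. Then run the given pebbling unchanged. -/

def whitenPrefix (c : Cfg) (k : ℕ) : Cfg := fun i => if i < k then c i else ((c i).1, 0)

lemma whitenPrefix_zero_apply (c : Cfg) (i : ℕ) : whitenPrefix c 0 i = ((c i).1, 0) := rfl

lemma valid_whitenPrefix {n : ℕ} {c : Cfg} (hc : Valid n c) (k : ℕ) :
    Valid n (whitenPrefix c k) := by
  refine ⟨fun i => ?_, fun i hi => ?_⟩
  · obtain ⟨hb, hw, hpw⟩ := hc.1 i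
    unfold pw at hpw ⊢
    by_cases hi : i < k
    · simpa [whitenPrefix, hi] using ⟨hb, hw, hpw⟩
    · simp only [whitenPrefix, hi, if_false]
      exact ⟨hb, le_rfl, by linarith⟩
  · simp [whitenPrefix, hc.2 i hi]

lemma whitenPrefix_eq_self {n k : ℕ} {c : Cfg} (hc : Valid n c) (hk : n ≤ k) :
    whitenPrefix c k = c := by
  funext i
  by_cases hi : i < k
  · simp [whitenPrefix, hi]
  · simp [whitenPrefix, hi, hc.2 i (by omega)]

lemma weight_whitenPrefix_le {n : ℕ} {c : Cfg} (hw : ∀ i, 0 ≤ (c i).2) (k : ℕ) :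
    weight n (whitenPrefix c k) ≤ weight n c := by
  refine Finset.sum_le_sum fun i _ => ?_
  by_cases hi : i < k
  · simp [whitenPrefix, hi, pw]
  · simpa [whitenPrefix, hi, pw] using hw i

lemma move_whitenPrefix_succ (d n : ℕ) (c : Cfg) (k : ℕ) (hw : 0 ≤ (c k).2) :
    Move d n (whitenPrefix c k) (whitenPrefix c (k + 1)) := by
  refine Or.inr <| Or.inr <| Or.inl ⟨k, ?_, ?_, fun j _ => ?_⟩
  · simp [whitenPrefix]
  · simpa [whitenPrefix] using hw
  · have : j < k + 1 ↔ j < k := by omega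
    simp only [whitenPrefix, this]

lemma pebbling_whitenPrefix (d : ℕ) {n : ℕ} {c : Cfg} (hc : Valid n c) :
    Pebbling d n n (whitenPrefix c) :=
  ⟨fun k _ => valid_whitenPrefix hc k, fun k _ => move_whitenPrefix_succ d n c k (hc.1 k).2.1⟩

def concatAt (a : ℕ → Cfg) (T : ℕ) (b : ℕ → Cfg) : ℕ → Cfg :=
  fun t => if t ≤ T then a t else b (t - T)

section concatAt

variable {a b : ℕ → Cfg} {T : ℕ}

lemma concatAt_of_le {t : ℕ} (ht : t ≤ T) : concatAt a T b t = a t := if_pos ht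

lemma concatAt_of_ge (hab : a T = b 0) {t : ℕ} (ht : T ≤ t) :
    concatAt a T b t = b (t - T) := by
  unfold concatAt
  split_ifs with h
  · obtain rfl : t = T := le_antisymm h ht
    simpa using hab
  · rfl

lemma concatAt_add (hab : a T = b 0) (t : ℕ) : concatAt a T b (T + t) = b t := by
  rw [concatAt_of_ge hab (Nat.le_add_right T t), Nat.add_sub_cancel_left]

lemma forall_concatAt {p : Cfg → Prop} {S : ℕ} (hab : a T = b 0)
    (ha : ∀ t ≤ T, p (a t)) (hb : ∀ t ≤ S, p (b t)) :
    ∀ t ≤ T + S, p (concatAt a T b t) := by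
  intro t ht
  rcases le_total t T with h | h
  · rw [concatAt_of_le h]
    exact ha t h
  · rw [concatAt_of_ge hab h]
    exact hb _ (by omega)

lemma Pebbling.concatAt {d n S : ℕ} (ha : Pebbling d n T a) (hb : Pebbling d n S b)
    (hab : a T = b 0) : Pebbling d n (T + S) (concatAt a T b) := by
  refine ⟨forall_concatAt hab ha.1 hb.1, fun t ht => ?_⟩
  rcases lt_or_ge t T with h | h
  · rw [concatAt_of_le h.le, concatAt_of_le h]
    exact ha.2 t h
  · rw [concatAt_of_ge hab h, concatAt_of_ge hab (by omega), Nat.sub_add_comm h]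
    exact hb.2 _ (by omega)

end concatAt

theorem initial_white_useless_general (d n : ℕ) (T : ℕ) (c : ℕ → Cfg) (P : ℝ)
    (hp : Pebbling d n T c)
    (hP : ∀ t, t ≤ T → weight n (c t) ≤ P) :
    ∃ T' c', Pebbling d n T' c' ∧
      (∀ i, ((c' 0) i).1 = ((c 0) i).1 ∧ ((c' 0) i).2 = 0) ∧
      c' T' = c T ∧
      ((∃ t, t ≤ T ∧ pw (c t) 0 = 1) → ∃ t, t ≤ T' ∧ pw (c' t) 0 = 1) ∧
      ∀ t, t ≤ T' → weight n (c' t) ≤ P := by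
  have hc₀ : Valid n (c 0) := hp.1 0 (Nat.zero_le T)
  have hjoin : whitenPrefix (c 0) n = c 0 := whitenPrefix_eq_self hc₀ le_rfl
  refine ⟨n + T, concatAt (whitenPrefix (c 0)) n c, (pebbling_whitenPrefix d hc₀).concatAt hp hjoin,
    fun i => ?_, concatAt_add hjoin T, ?_, ?_⟩
  · rw [concatAt_of_le (Nat.zero_le n), whitenPrefix_zero_apply]
    exact ⟨rfl, rfl⟩
  · rintro ⟨t, ht, hroot⟩
    exact ⟨n + t, by omega, by rwa [concatAt_add hjoin]⟩
  · refine forall_concatAt (p := fun c => weight n c ≤ P) hjoin (fun k _ => ?_) hP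
    exact (weight_whitenPrefix_le (fun i => (hc₀.1 i).2.1) k).trans (hP 0 (Nat.zero_le T))

/-- if a fractional sub-pebbling starts with some initial white and
black weight and never exceeds total weight P, there is a sub-pebbling with the
same initial black weight and no initial white weight, achieving the same goal,
that also never exceeds total weight P. -/
theorem initial_white_useless (d n : ℕ) (T : ℕ) (c : ℕ → Cfg) (P : ℝ)
    (hp : Pebbling d n T c)
    (hend : ∀ i, ((c T) i).2 = 0)
    (hP : ∀ t, t ≤ T → weight n (c t) ≤ P) :
    ∃ T' c', Pebbling d n T' c' ∧
      (∀ i, ((c' 0) i).1 = ((c 0) i).1 ∧ ((c' 0) i).2 = 0) ∧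
      c' T' = c T ∧
      ((∃ t, t ≤ T ∧ pw (c t) 0 = 1) → ∃ t, t ≤ T' ∧ pw (c' t) 0 = 1) ∧
      ∀ t, t ≤ T' → weight n (c' t) ≤ P :=
  initial_white_useless_general d n T c P hp hP
end
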